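/- arXiv:2310.08357 — 4 statements merged into one kernel-verified Lean document; each statement's English description precedes it below -/
import Mathlib

section
/- With Q ⋆ Q' the join of homogeneous affine monoids Q and Q', the Hilbert series of the normalizations satisfy Hilb(over(Q ⋆ Q'), t) = Hilb(Q̄, t) · Hilb(Q̄', t). -/
open scoped Classical

noncomputable section

namespace MonoidHilbert

/-- The saturation (normalization) of an additive submonoid of `σ → ℤ`:
`Q̄ = ℤQ ∩ ℝ_{≥0}Q`, described as the set of elements of the group generated by `Q`
some positive multiple of which lies in `Q`. -/
def saturation {σ : Type*} (Q : AddSubmonoid (σ → ℤ)) : AddSubmonoid (σ → ℤ) where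
  carrier := {x | x ∈ AddSubgroup.closure (Q : Set (σ → ℤ)) ∧ ∃ n : ℕ, 0 < n ∧ n • x ∈ Q}
  zero_mem' := ⟨AddSubgroup.zero_mem _, 1, one_pos, by simpa using Q.zero_mem⟩
  add_mem' := by
    rintro x y ⟨hx, n, hn, hnx⟩ ⟨hy, m, hm, hmy⟩
    refine ⟨AddSubgroup.add_mem _ hx hy, n * m, Nat.mul_pos hn hm, ?_⟩
    have h1 : (n * m) • (x + y) = m • (n • x) + n • (m • y) := by
      rw [smul_add]
      congr 1
      · rw [mul_comm, mul_smul]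
      · rw [mul_smul]
    rw [h1]
    exact Q.add_mem (AddSubmonoid.nsmul_mem Q hnx m) (AddSubmonoid.nsmul_mem Q hmy n)

/-- The number of degree-`n` elements of `S`, i.e. `dim_k k[S]_n`. -/
def hilbCoeff {σ : Type*} (S : Set (σ → ℤ)) (deg : (σ → ℤ) →+ ℤ) (n : ℕ) : ℕ :=
  Nat.card {x : σ → ℤ // x ∈ S ∧ deg x = n}

/-- The Hilbert series of (the monoid algebra on) `S` with respect to the grading `deg`. -/
def hilbSeries {σ : Type*} (S : Set (σ → ℤ)) (deg : (σ → ℤ) →+ ℤ) : PowerSeries ℤ :=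
  PowerSeries.mk fun n => (hilbCoeff S deg n : ℤ)

/-- The Krull dimension of the monoid algebra `k[Q]`, i.e. the rank of the group `ℤQ`. -/
def monoidDim {σ : Type*} (Q : AddSubmonoid (σ → ℤ)) : ℕ :=
  Module.finrank ℤ (Submodule.span ℤ (Q : Set (σ → ℤ)))

/-- `h` is the h-polynomial: `Hilb = h(t)/(1-t)^D`. -/
def IsHPoly {σ : Type*} (S : Set (σ → ℤ)) (deg : (σ → ℤ) →+ ℤ) (D : ℕ)
    (h : Polynomial ℤ) : Prop :=
  (h : PowerSeries ℤ) = hilbSeries S deg * (1 - PowerSeries.X) ^ D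

/-- A homogeneous affine monoid in `ℤ^d`: a finitely generated submonoid all of whose
generators lie on the hyperplane `deg = 1` for a linear functional `deg`. -/
structure HomAffineMonoid (d : ℕ) where
  gens : Finset (Fin d → ℤ)
  deg : (Fin d → ℤ) →+ ℤ
  deg_one : ∀ s ∈ gens, deg s = 1

/-- The underlying affine monoid. -/
def HomAffineMonoid.Q {d : ℕ} (M : HomAffineMonoid d) : AddSubmonoid (Fin d → ℤ) :=
  AddSubmonoid.closure M.gens

end MonoidHilbert

namespace MonoidHilbert

/-- Embedding `α ↦ (α, 0_{d'}, 0)` of `ℤ^d` into `ℤ^{d+d'+1}`. -/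
def joinL {d d' : ℕ} (α : Fin d → ℤ) : Fin (d + d' + 1) → ℤ :=
  fun i => if h : (i : ℕ) < d then α ⟨i, h⟩ else 0

/-- Embedding `α' ↦ (0_d, α', 1)` of `ℤ^{d'}` into `ℤ^{d+d'+1}`. -/
def joinR {d d' : ℕ} (α : Fin d' → ℤ) : Fin (d + d' + 1) → ℤ :=
  fun i => if h0 : (i : ℕ) < d then 0
    else if h : (i : ℕ) < d + d' then α ⟨(i : ℕ) - d, by omega⟩ else 1

/-- Projection onto the first `d` coordinates, as an additive homomorphism. -/
def projHom (d d' : ℕ) : (Fin (d + d' + 1) → ℤ) →+ (Fin d → ℤ) :=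
  AddMonoidHom.mk' (fun x i => x (Fin.castLE (by omega) i)) (fun a b => rfl)

/-- The join `Q ⋆ Q'` of two homogeneous affine monoids, generated by `(α_i, 0, 0)` and
`(0, α'_j, 1)` for the generators `α_i` of `Q` and `α'_j` of `Q'`. -/
def HomAffineMonoid.join {d d' : ℕ} (M : HomAffineMonoid d) (M' : HomAffineMonoid d') :
    HomAffineMonoid (d + d' + 1) where
  gens := M.gens.image joinL ∪ M'.gens.image joinR
  deg := M.deg.comp (projHom d d') +
    Pi.evalAddMonoidHom (fun _ : Fin (d + d' + 1) => ℤ) ⟨d + d', by omega⟩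
  deg_one := by
    intro s hs
    simp only [Finset.mem_union, Finset.mem_image] at hs
    rcases hs with ⟨a, ha, rfl⟩ | ⟨a, ha, rfl⟩
    · have h1 : (projHom d d') (joinL a) = a := by
        funext i
        simp [projHom, joinL, i.isLt]
      have h2 : joinL (d' := d') a ⟨d + d', by omega⟩ = 0 := by
        simp [joinL]
      simp [h1, h2, M.deg_one a ha]
    · have h1 : (projHom d d') (joinR a) = 0 := by
        funext i
        simp [projHom, joinR, i.isLt]
      have h2 : joinR (d := d) a ⟨d + d', by omega⟩ = 1 := by
        simp [joinR]
      simp [h1, h2]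

end MonoidHilbert

namespace MonoidHilbert

/-!
The join embeds `ℤ^d × ℤ^{d'}` into `ℤ^{d+d'+1}` by the injective additive map
`(y, y') ↦ (y, y', deg' y')`, and `Q ⋆ Q'` is the image of `Q × Q'`. Saturation commutes with
injective images of products, so the normalization of the join is the image of `Q̄ × Q̄'`, and
its degree is `deg y + deg' y'`. The degree-`n` part of `Q̄ × Q̄'` is then the disjoint union of
the products of the degree-`i` part of `Q̄` and the degree-`j` part of `Q̄'` over `i + j = n`,
which is the coefficient identity of the product of Hilbert series. These parts are finite
because on `Q̄` the sup norm is bounded by a multiple of the degree.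
-/

open Finset in
theorem natCard_slice_prod {σ τ : Type*} {S : Set (σ → ℤ)} {T : Set (τ → ℤ)}
    {deg₁ : (σ → ℤ) →+ ℤ} {deg₂ : (τ → ℤ) →+ ℤ} (hS₀ : ∀ s ∈ S, 0 ≤ deg₁ s)
    (hT₀ : ∀ t ∈ T, 0 ≤ deg₂ t) (hS : ∀ i : ℕ, {s | s ∈ S ∧ deg₁ s = i}.Finite)
    (hT : ∀ j : ℕ, {t | t ∈ T ∧ deg₂ t = j}.Finite) (n : ℕ) :
    Nat.card {p : (σ → ℤ) × (τ → ℤ) | p ∈ S ×ˢ T ∧ deg₁ p.1 + deg₂ p.2 = n} =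
      ∑ ij ∈ antidiagonal n, hilbCoeff S deg₁ ij.1 * hilbCoeff T deg₂ ij.2 := by
  have hslice : {p : (σ → ℤ) × (τ → ℤ) | p ∈ S ×ˢ T ∧ deg₁ p.1 + deg₂ p.2 = n} =
      ↑((antidiagonal n).biUnion fun ij => (hS ij.1).toFinset ×ˢ (hT ij.2).toFinset) := by
    ext ⟨s, t⟩
    simp only [Set.mem_ofPred_eq, Set.mem_prod, coe_biUnion, coe_product, Set.Finite.coe_toFinset,
      Set.mem_iUnion, mem_coe, HasAntidiagonal.mem_antidiagonal, Prod.exists, exists_prop]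
    constructor
    · rintro ⟨⟨hs, ht⟩, hst⟩
      have := hS₀ s hs
      have := hT₀ t ht
      exact ⟨(deg₁ s).toNat, (deg₂ t).toNat, by omega, ⟨hs, by omega⟩, ht, by omega⟩
    · rintro ⟨i, j, hij, ⟨hs, hi⟩, ht, hj⟩
      exact ⟨⟨hs, ht⟩, by rw [hi, hj, ← hij]; push_cast; rfl⟩
  rw [hslice, Nat.card_coe_set_eq, Set.ncard_coe_finset, card_biUnion]
  · refine sum_congr rfl fun ij _ => ?_
    rw [card_product, ← Nat.card_eq_card_finite_toFinset, ← Nat.card_eq_card_finite_toFinset]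
    rfl
  · intro ij hij kl hkl hne
    rw [Function.onFun, disjoint_left]
    rintro ⟨s, t⟩ h₁ h₂
    simp only [mem_product, Set.Finite.mem_toFinset, Set.mem_ofPred_eq] at h₁ h₂
    rw [mem_coe, HasAntidiagonal.mem_antidiagonal] at hij hkl
    have : ij.1 = kl.1 := by exact_mod_cast h₁.1.2.symm.trans h₂.1.2
    exact hne (Prod.ext this (by omega))

open Finset in
theorem hilbSeries_image_prod {σ τ ρ : Type*} {S : Set (σ → ℤ)} {T : Set (τ → ℤ)}
    {deg₁ : (σ → ℤ) →+ ℤ} {deg₂ : (τ → ℤ) →+ ℤ} {deg : (ρ → ℤ) →+ ℤ}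
    {f : (σ → ℤ) × (τ → ℤ) → (ρ → ℤ)} (hf : Set.InjOn f (S ×ˢ T))
    (hdeg : ∀ p ∈ S ×ˢ T, deg (f p) = deg₁ p.1 + deg₂ p.2) (hS₀ : ∀ s ∈ S, 0 ≤ deg₁ s)
    (hT₀ : ∀ t ∈ T, 0 ≤ deg₂ t) (hS : ∀ i : ℕ, {s | s ∈ S ∧ deg₁ s = i}.Finite)
    (hT : ∀ j : ℕ, {t | t ∈ T ∧ deg₂ t = j}.Finite) :
    hilbSeries (f '' S ×ˢ T) deg = hilbSeries S deg₁ * hilbSeries T deg₂ := by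
  ext n
  have hslice : {x | x ∈ f '' S ×ˢ T ∧ deg x = n} =
      f '' {p | p ∈ S ×ˢ T ∧ deg₁ p.1 + deg₂ p.2 = n} := by
    ext x
    constructor
    · rintro ⟨⟨p, hp, rfl⟩, hx⟩
      exact ⟨p, ⟨hp, hdeg p hp ▸ hx⟩, rfl⟩
    · rintro ⟨p, ⟨hp, hpn⟩, rfl⟩
      exact ⟨⟨p, hp, rfl⟩, (hdeg p hp).trans hpn⟩
  have hcoeff : hilbCoeff (f '' S ×ˢ T) deg n =
      ∑ ij ∈ antidiagonal n, hilbCoeff S deg₁ ij.1 * hilbCoeff T deg₂ ij.2 := by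
    rw [← natCard_slice_prod hS₀ hT₀ hS hT, ← Nat.card_image_of_injOn (hf.mono fun p hp => hp.1),
      ← hslice]
    rfl
  simp only [hilbSeries, PowerSeries.coeff_mk, PowerSeries.coeff_mul, hcoeff]
  push_cast
  rfl

theorem saturation_map_prod {σ τ ρ : Type*} {f : (σ → ℤ) × (τ → ℤ) →+ (ρ → ℤ)}
    (hf : Function.Injective f) (P : AddSubmonoid (σ → ℤ)) (P' : AddSubmonoid (τ → ℤ)) :
    saturation ((P.prod P').map f) = ((saturation P).prod (saturation P')).map f := by
  have hclosure : AddSubgroup.closure (((P.prod P').map f : AddSubmonoid (ρ → ℤ)) : Set (ρ → ℤ)) =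
      ((AddSubgroup.closure (P : Set (σ → ℤ))).prod
        (AddSubgroup.closure (P' : Set (τ → ℤ)))).map f := by
    rw [AddSubmonoid.coe_map, AddSubmonoid.coe_prod, ← AddMonoidHom.map_closure,
      AddSubgroup.closure_prod P.zero_mem P'.zero_mem]
  ext x
  constructor
  · rintro ⟨hx, n, hn, q, hq, hqx⟩
    rw [hclosure] at hx
    obtain ⟨p, ⟨hp₁, hp₂⟩, rfl⟩ := hx
    obtain rfl : q = n • p := hf (by rw [hqx, map_nsmul])
    exact ⟨p, ⟨⟨hp₁, n, hn, hq.1⟩, ⟨hp₂, n, hn, hq.2⟩⟩, rfl⟩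
  · rintro ⟨p, ⟨⟨hp₁, n, hn, hnp⟩, ⟨hp₂, m, hm, hmp⟩⟩, rfl⟩
    refine ⟨hclosure ▸ ⟨p, ⟨hp₁, hp₂⟩, rfl⟩, n * m, Nat.mul_pos hn hm, (n * m) • p, ?_,
      map_nsmul f _ p⟩
    constructor
    · rw [Prod.smul_fst, mul_comm, mul_smul]
      exact AddSubmonoid.nsmul_mem _ hnp m
    · rw [Prod.smul_snd, mul_smul]
      exact AddSubmonoid.nsmul_mem _ hmp n

theorem HomAffineMonoid.exists_norm_le_mul_deg {k : ℕ} (N : HomAffineMonoid k) :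
    ∃ B : ℝ, ∀ q ∈ N.Q, ‖q‖ ≤ B * N.deg q := by
  refine ⟨∑ g ∈ N.gens, ‖g‖, fun q hq => ?_⟩
  induction hq using AddSubmonoid.closure_induction with
  | mem g hg =>
    rw [N.deg_one g hg, Int.cast_one, mul_one]
    exact Finset.single_le_sum (f := fun g : Fin k → ℤ => ‖g‖) (fun _ _ => norm_nonneg _) hg
  | zero => simp
  | add a b _ _ ha hb =>
    rw [map_add, Int.cast_add, mul_add]
    exact (norm_add_le a b).trans (add_le_add ha hb)

theorem HomAffineMonoid.deg_nonneg {k : ℕ} (N : HomAffineMonoid k) {q : Fin k → ℤ}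
    (hq : q ∈ N.Q) : 0 ≤ N.deg q := by
  induction hq using AddSubmonoid.closure_induction with
  | mem g hg => rw [N.deg_one g hg]; exact zero_le_one
  | zero => simp
  | add a b _ _ ha hb => rw [map_add]; exact add_nonneg ha hb

theorem HomAffineMonoid.deg_nonneg_of_mem_saturation {k : ℕ} (N : HomAffineMonoid k) {x : Fin k → ℤ}
    (hx : x ∈ saturation N.Q) : 0 ≤ N.deg x := by
  obtain ⟨-, n, hn, hnx⟩ := hx
  have := N.deg_nonneg hnx
  rw [map_nsmul, nsmul_eq_mul] at this
  exact nonneg_of_mul_nonneg_right this (by exact_mod_cast hn)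

theorem HomAffineMonoid.finite_saturation_deg_eq {k : ℕ} (N : HomAffineMonoid k) (n : ℤ) :
    {x | x ∈ saturation N.Q ∧ N.deg x = n}.Finite := by
  obtain ⟨B, hB⟩ := N.exists_norm_le_mul_deg
  refine (isCompact_closedBall (0 : Fin k → ℤ) (B * n)).finite_of_discrete.subset ?_
  rintro x ⟨⟨-, m, hm, hmx⟩, rfl⟩
  have hbound := hB _ hmx
  rw [← natCast_zsmul, norm_smul, map_zsmul, smul_eq_mul, Int.cast_mul, Int.norm_natCast,
    Int.cast_natCast, mul_left_comm] at hbound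
  rw [mem_closedBall_zero_iff]
  exact le_of_mul_le_mul_left hbound (by exact_mod_cast hm)

def joinEmb (d d' : ℕ) (deg' : (Fin d' → ℤ) →+ ℤ) :
    (Fin d → ℤ) × (Fin d' → ℤ) →+ (Fin (d + d' + 1) → ℤ) where
  toFun p i := if h : (i : ℕ) < d then p.1 ⟨i, h⟩
    else if h' : (i : ℕ) < d + d' then p.2 ⟨i - d, by omega⟩ else deg' p.2
  map_zero' := by
    funext i
    simp
  map_add' p q := by
    funext i
    simp only [Prod.fst_add, Prod.snd_add, Pi.add_apply, map_add]
    split_ifs <;> rfl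

section Join

variable {d d' : ℕ} {deg' : (Fin d' → ℤ) →+ ℤ}

@[simp]
theorem projHom_joinEmb (p : (Fin d → ℤ) × (Fin d' → ℤ)) :
    projHom d d' (joinEmb d d' deg' p) = p.1 := by
  funext i
  simp [projHom, joinEmb]

theorem joinEmb_apply_add_left (p : (Fin d → ℤ) × (Fin d' → ℤ)) (j : Fin d') :
    joinEmb d d' deg' p ⟨d + j, by omega⟩ = p.2 j := by
  simp [joinEmb]

theorem joinEmb_apply_last (p : (Fin d → ℤ) × (Fin d' → ℤ)) :
    joinEmb d d' deg' p ⟨d + d', by omega⟩ = deg' p.2 := by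
  simp [joinEmb]

theorem joinEmb_injective : Function.Injective (joinEmb d d' deg') := by
  intro p q h
  refine Prod.ext ?_ (funext fun j => ?_)
  · rw [← projHom_joinEmb (deg' := deg') p, h, projHom_joinEmb]
  · rw [← joinEmb_apply_add_left (deg' := deg') p, h, joinEmb_apply_add_left]

theorem joinEmb_inl (a : Fin d → ℤ) : joinEmb d d' deg' (a, 0) = joinL a := by
  funext i
  simp only [joinEmb, joinL, AddMonoidHom.coe_mk, ZeroHom.coe_mk, map_zero]
  split_ifs <;> rfl

theorem joinEmb_inr {a : Fin d' → ℤ} (ha : deg' a = 1) : joinEmb d d' deg' (0, a) = joinR a := by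
  funext i
  simp only [joinEmb, joinR, AddMonoidHom.coe_mk, ZeroHom.coe_mk, ha]
  split_ifs <;> rfl

variable (M : HomAffineMonoid d) (M' : HomAffineMonoid d')

theorem join_deg_joinEmb (p : (Fin d → ℤ) × (Fin d' → ℤ)) :
    (M.join M').deg (joinEmb d d' M'.deg p) = M.deg p.1 + M'.deg p.2 := by
  simp [HomAffineMonoid.join, joinEmb_apply_last]

theorem join_Q_eq_map : (M.join M').Q = (M.Q.prod M'.Q).map (joinEmb d d' M'.deg) := by
  apply le_antisymm
  · rw [HomAffineMonoid.Q, AddSubmonoid.closure_le]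
    simp only [HomAffineMonoid.join, Finset.coe_union, Finset.coe_image]
    rintro _ (⟨a, ha, rfl⟩ | ⟨a, ha, rfl⟩)
    · exact ⟨(a, 0), ⟨AddSubmonoid.subset_closure ha, zero_mem _⟩, joinEmb_inl a⟩
    · exact ⟨(0, a), ⟨zero_mem _, AddSubmonoid.subset_closure ha⟩, joinEmb_inr (M'.deg_one a ha)⟩
  · rw [AddSubmonoid.map_le_iff_le_comap, AddSubmonoid.prod_le_iff]
    constructor <;> rw [AddSubmonoid.map_le_iff_le_comap, HomAffineMonoid.Q,
      AddSubmonoid.closure_le] <;> intro a ha <;> apply AddSubmonoid.subset_closure <;>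
      simp only [HomAffineMonoid.join, Finset.coe_union, Finset.coe_image]
    · exact Or.inl ⟨a, ha, (joinEmb_inl a).symm⟩
    · exact Or.inr ⟨a, ha, (joinEmb_inr (M'.deg_one a ha)).symm⟩

end Join

/-- **Theorem.** The Hilbert series of the normalization of the join `Q ⋆ Q'` is the product
of the Hilbert series of the normalizations of `Q` and of `Q'`. -/
theorem hilbSeries_saturation_join {d d' : ℕ} (M : HomAffineMonoid d)
    (M' : HomAffineMonoid d') :
    hilbSeries (saturation (M.join M').Q : Set (Fin (d + d' + 1) → ℤ)) (M.join M').deg =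
      hilbSeries (saturation M.Q : Set (Fin d → ℤ)) M.deg *
        hilbSeries (saturation M'.Q : Set (Fin d' → ℤ)) M'.deg := by
  rw [join_Q_eq_map, saturation_map_prod joinEmb_injective, AddSubmonoid.coe_map,
    AddSubmonoid.coe_prod]
  exact hilbSeries_image_prod joinEmb_injective.injOn (fun p _ => join_deg_joinEmb M M' p)
    (fun _ => M.deg_nonneg_of_mem_saturation) (fun _ => M'.deg_nonneg_of_mem_saturation)
    (fun i => M.finite_saturation_deg_eq i) (fun j => M'.finite_saturation_deg_eq j)

end MonoidHilbert
end
end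

section
/- Let P be the 3-dimensional lattice simplex with vertices (0,0,0), (1,1,0), (0,1,1), (1,0,1). Then the toric ring k[Q_P] is a polynomial ring in 4 variables (in particular k[Q_P] is normal as a ring, i.e., its own normalization), but the Ehrhart ring of P is isomorphic to k[X_1,X_2,X_3,X_4,Y]/(X_1X_2X_3X_4 − Y²), which strictly contains k[Q_P]. Hence the Ehrhart ring of a lattice polytope need not coincide with the normalization of its toric ring. -/
open scoped Classical

noncomputable section

open scoped Pointwise

namespace MonoidHilbert

variable {V : Type*}

/-- The vector `e_u + e_v ∈ ℤ^V` associated to an edge `{u,v}`. -/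
def edgeVec (u v : V) : V → ℤ :=
  fun w => (if w = u then 1 else 0) + (if w = v then 1 else 0)

/-- The edge monoid `Q_G ⊂ ℤ^{V(G)}` of a graph `G`, generated by the vectors
`e_u + e_v` over all edges `{u,v}` of `G`. -/
def edgeMonoid (G : SimpleGraph V) : AddSubmonoid (V → ℤ) :=
  AddSubmonoid.closure {x | ∃ u v, G.Adj u v ∧ x = edgeVec u v}

/-- The Hilbert series of a subset `S ⊆ ℤ^V` in the standard grading of edge rings,
where an element of coordinate-sum `2n` has degree `n`. -/
def edgeHilbSeries [Fintype V] (S : Set (V → ℤ)) : PowerSeries ℤ :=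
  PowerSeries.mk fun n => (Nat.card {x : V → ℤ // x ∈ S ∧ ∑ i, x i = 2 * n} : ℤ)

/-- `h` is the h-polynomial of the edge-graded algebra on `S` with denominator `(1-t)^D`. -/
def IsEdgeHPoly [Fintype V] (S : Set (V → ℤ)) (D : ℕ) (h : Polynomial ℤ) : Prop :=
  (h : PowerSeries ℤ) = edgeHilbSeries S * (1 - PowerSeries.X) ^ D

/-- The real point associated to a lattice point. -/
def realify (x : V → ℤ) : V → ℝ := fun i => (x i : ℝ)

/-- A point of `ℝ^V` is a lattice point if all its coordinates are integers. -/
def IsLatticePoint (x : V → ℝ) : Prop := ∃ z : V → ℤ, x = realify z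

/-- The edge polytope `P_G`: the convex hull of the vectors `e_u + e_v` over edges of `G`. -/
def edgePolytope (G : SimpleGraph V) : Set (V → ℝ) :=
  convexHull ℝ {x | ∃ u v, G.Adj u v ∧ x = realify (edgeVec u v)}

/-- The codegree of a polytope `P ⊆ ℝ^V`:
the least `ℓ > 0` such that `ℓP` has a lattice point in its relative interior. -/
def codeg [Fintype V] (P : Set (V → ℝ)) : ℕ :=
  sInf {ℓ : ℕ | 0 < ℓ ∧ ∃ x ∈ intrinsicInterior ℝ ((ℓ : ℝ) • P), IsLatticePoint x}

end MonoidHilbert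

namespace MonoidHilbert

/-- The lattice points of the simplex `P = conv{(0,0,0),(1,1,0),(0,1,1),(1,0,1)}`. -/
def simplexVerts : Set (Fin 3 → ℤ) := {![0,0,0], ![1,1,0], ![0,1,1], ![1,0,1]}

/-- The simplex `P = conv{(0,0,0),(1,1,0),(0,1,1),(1,0,1)} ⊂ ℝ³`. -/
def simplexP : Set (Fin 3 → ℝ) := convexHull ℝ (realify '' simplexVerts)

/-- The monoid `Q_P ⊂ ℤ⁴` generated by `(α,1)` for `α` a lattice point of `P`. -/
def simplexQ : AddSubmonoid (Fin 4 → ℤ) :=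
  AddSubmonoid.closure {![0,0,0,1], ![1,1,0,1], ![0,1,1,1], ![1,0,1,1]}

/-- Forgetting the last coordinate. -/
def proj3 (x : Fin 4 → ℤ) : Fin 3 → ℤ := fun i => x i.castSucc

/-- The Ehrhart monoid of `P`: all `(α,n)` with `n ≥ 0` and `α ∈ nP ∩ ℤ³`; the associated
monoid algebra is the Ehrhart ring `Ehr_k(P)`. -/
def simplexEhrhartMonoid : AddSubmonoid (Fin 4 → ℤ) where
  carrier := {x | 0 ≤ x 3 ∧ realify (proj3 x) ∈ ((x 3 : ℤ) : ℝ) • simplexP}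
  zero_mem' := by
    constructor
    · exact le_refl 0
    · have hne : simplexP.Nonempty := by
        refine ⟨realify ![0,0,0], subset_convexHull ℝ _ ?_⟩
        exact ⟨![0,0,0], by simp [simplexVerts], rfl⟩
      have h0 : (((0 : Fin 4 → ℤ) 3 : ℤ) : ℝ) • simplexP = 0 := by
        simpa using Set.zero_smul_set hne
      rw [h0]
      have : realify (proj3 (0 : Fin 4 → ℤ)) = 0 := by
        funext i; simp [realify, proj3]
      simp [this]
  add_mem' := by
    rintro x y ⟨hx3, hxP⟩ ⟨hy3, hyP⟩
    constructor
    · have : (x + y) 3 = x 3 + y 3 := rfl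
      omega
    · have hconv : Convex ℝ simplexP := convex_convexHull ℝ _
      have hsum : (((x + y) 3 : ℤ) : ℝ) • simplexP =
          ((x 3 : ℤ) : ℝ) • simplexP + ((y 3 : ℤ) : ℝ) • simplexP := by
        have : (((x + y) 3 : ℤ) : ℝ) = ((x 3 : ℤ) : ℝ) + ((y 3 : ℤ) : ℝ) := by
          push_cast [Pi.add_apply]; ring
        rw [this]
        exact (hconv.add_smul (p := ((x 3 : ℤ) : ℝ)) (q := ((y 3 : ℤ) : ℝ)) (by exact_mod_cast hx3) (by exact_mod_cast hy3))
      have hadd : realify (proj3 (x + y)) = realify (proj3 x) + realify (proj3 y) := by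
        funext i; simp [realify, proj3]
      rw [hsum, hadd]
      exact Set.add_mem_add hxP hyP

end MonoidHilbert


/-!
The four generators of `Q_P` are linearly independent, so `Q_P ≅ ℕ⁴`, `k[Q_P]` is a polynomial
ring, and `Q_P` is saturated in `ℤQ_P`. The Ehrhart monoid is the cone
`0 ≤ x₀ + x₁ - x₂, x₁ + x₂ - x₀, x₀ + x₂ - x₁` and `x₀ + x₁ + x₂ ≤ 2 x₃`; it contains
`(1,1,1,2)`, whose odd `x₀ + x₁ + x₂` keeps it out of `Q_P`. Every point of the cone is uniquely
`∑ cᵢ gᵢ + e (1,1,1,2)` with `cᵢ ≥ 0`, `e ∈ {0,1}`, and the product of two such normal forms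
differs from a normal form only by the carry `Y² = X₀X₁X₂X₃`. Hence sending a point to its
normal-form monomial is an inverse of `k[X₀,…,X₃,Y]/(X₀X₁X₂X₃ - Y²) → Ehr_k(P)`.
-/

namespace MonoidHilbert

section LinearIndependent

variable {ι M : Type*} [AddCommGroup M]

theorem _root_.Finsupp.linearCombination_int_mapRange_natCast (v : ι → M) (d : ι →₀ ℕ) :
    Finsupp.linearCombination ℤ v (d.mapRange (↑) Nat.cast_zero) =
      Finsupp.linearCombination ℕ v d := by
  simp [Finsupp.linearCombination_apply, Finsupp.sum_mapRange_index]

def _root_.LinearIndependent.addSubmonoidClosureEquiv {v : ι → M}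
    (hv : LinearIndependent ℤ v) : (ι →₀ ℕ) ≃+ AddSubmonoid.closure (Set.range v) :=
  (LinearEquiv.ofInjective _ (hv.restrict_scalars' ℕ)).toAddEquiv.trans
    (AddEquiv.addSubmonoidCongr (by
      rw [Finsupp.range_linearCombination, Submodule.span_nat_eq_addSubmonoidClosure]))

theorem saturation_closure_range {σ : Type*} {v : ι → σ → ℤ} (hv : LinearIndependent ℤ v) :
    saturation (AddSubmonoid.closure (Set.range v)) = AddSubmonoid.closure (Set.range v) := by
  refine le_antisymm ?_ fun x hx => ⟨AddSubgroup.subset_closure hx, 1, one_pos, by simpa⟩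
  rintro x ⟨hx, n, hn, hnx⟩
  have hgrp : AddSubgroup.closure (AddSubmonoid.closure (Set.range v) : Set (σ → ℤ)) ≤
      (LinearMap.range (Finsupp.linearCombination ℤ v)).toAddSubgroup := by
    rw [Finsupp.range_linearCombination, Submodule.span_int_eq_addSubgroupClosure,
      AddSubgroup.closure_le]
    exact AddSubmonoid.closure_le.2 AddSubgroup.subset_closure
  obtain ⟨c, rfl⟩ := hgrp hx
  rw [← Submodule.span_nat_eq_addSubmonoidClosure, ← Finsupp.range_linearCombination] at hnx ⊢
  obtain ⟨d, hd⟩ := hnx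
  have hcd : n • c = d.mapRange (↑) Nat.cast_zero := by
    apply hv
    rw [Finsupp.linearCombination_int_mapRange_natCast, hd, map_nsmul]
  have hc : ∀ i, 0 ≤ c i := fun i => by
    have hci := congr($hcd i)
    simp only [Finsupp.smul_apply, Finsupp.mapRange_apply, nsmul_eq_mul] at hci
    exact nonneg_of_mul_nonneg_right (hci ▸ Int.natCast_nonneg _) (by exact_mod_cast hn)
  refine ⟨c.mapRange Int.toNat rfl, ?_⟩
  rw [← Finsupp.linearCombination_int_mapRange_natCast]
  congr 1
  ext i
  simp [hc i]

end LinearIndependent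

theorem prod_pow_mul_pow_mul_prod_pow_mul_pow {R ι : Type*} [CommMonoid R] [Fintype ι]
    {a : ι → R} {y : R} (hy : y ^ 2 = ∏ i, a i) (c d : ι → ℕ) (e f : ℕ) :
    ((∏ i, a i ^ c i) * y ^ e) * ((∏ i, a i ^ d i) * y ^ f) =
      (∏ i, a i ^ (c i + d i + (e + f) / 2)) * y ^ ((e + f) % 2) := by
  have hyef : y ^ e * y ^ f = (∏ i, a i ^ ((e + f) / 2)) * y ^ ((e + f) % 2) := by
    rw [← pow_add, Finset.prod_pow, ← hy, ← pow_mul, ← pow_add, Nat.div_add_mod]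
  calc ((∏ i, a i ^ c i) * y ^ e) * ((∏ i, a i ^ d i) * y ^ f)
      = (∏ i, a i ^ c i) * (∏ i, a i ^ d i) * (y ^ e * y ^ f) :=
        mul_mul_mul_comm _ _ _ _
    _ = (∏ i, a i ^ (c i + d i + (e + f) / 2)) * y ^ ((e + f) % 2) := by
      simp only [hyef, ← mul_assoc, ← Finset.prod_mul_distrib, pow_add]

def simplexGens : Fin 4 → Fin 4 → ℤ := ![![0,0,0,1], ![1,1,0,1], ![0,1,1,1], ![1,0,1,1]]

theorem simplexQ_eq_closure_range : simplexQ = AddSubmonoid.closure (Set.range simplexGens) := by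
  rw [simplexQ]
  congr 1
  ext x
  simp [simplexGens]
  tauto

theorem linearIndependent_simplexGens : LinearIndependent ℤ simplexGens := by
  rw [Fintype.linearIndependent_iff]
  intro g hg
  have h0 := congrFun hg 0
  have h1 := congrFun hg 1
  have h2 := congrFun hg 2
  have h3 := congrFun hg 3
  simp [simplexGens, Fin.sum_univ_four] at h0 h1 h2 h3
  intro i
  fin_cases i <;> simp <;> omega

def simplexQEquiv : (Fin 4 →₀ ℕ) ≃+ simplexQ :=
  linearIndependent_simplexGens.addSubmonoidClosureEquiv.trans
    (AddEquiv.addSubmonoidCongr simplexQ_eq_closure_range.symm)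

theorem saturation_simplexQ : saturation simplexQ = simplexQ := by
  rw [simplexQ_eq_closure_range, saturation_closure_range linearIndependent_simplexGens]

theorem even_of_mem_simplexQ {x : Fin 4 → ℤ} (hx : x ∈ simplexQ) : Even (x 0 + x 1 + x 2) := by
  induction hx using AddSubmonoid.closure_induction with
  | mem y hy =>
    simp only [Set.mem_insert_iff, Set.mem_singleton_iff] at hy
    rcases hy with rfl | rfl | rfl | rfl <;> decide
  | zero => decide
  | add y z _ _ hy hz => simpa [add_add_add_comm] using hy.add hz

theorem simplexP_eq : simplexP = {p | 0 ≤ p 0 + p 1 - p 2 ∧ 0 ≤ p 1 + p 2 - p 0 ∧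
    0 ≤ p 0 + p 2 - p 1 ∧ p 0 + p 1 + p 2 ≤ 2} := by
  refine le_antisymm (convexHull_min ?_ ?_) fun p ⟨h1, h2, h3, h4⟩ => ?_
  · rintro _ ⟨z, hz, rfl⟩
    simp only [simplexVerts, Set.mem_insert_iff, Set.mem_singleton_iff] at hz
    rcases hz with rfl | rfl | rfl | rfl <;> norm_num [realify, Matrix.cons_val_two]
  · rintro x ⟨hx1, hx2, hx3, hx4⟩ y ⟨hy1, hy2, hy3, hy4⟩ a b ha hb hab
    refine ⟨?_, ?_, ?_, ?_⟩ <;> simp only [Pi.add_apply, Pi.smul_apply, smul_eq_mul] <;> nlinarith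
  · let w : Fin 4 → ℝ := ![1 - (p 0 + p 1 + p 2) / 2, (p 0 + p 1 - p 2) / 2,
      (p 1 + p 2 - p 0) / 2, (p 0 + p 2 - p 1) / 2]
    let z : Fin 4 → Fin 3 → ℝ := ![realify ![0,0,0], realify ![1,1,0], realify ![0,1,1],
      realify ![1,0,1]]
    have hp : ∑ i, w i • z i = p := by
      funext j
      fin_cases j <;> simp [w, z, Fin.sum_univ_four, realify] <;> ring
    rw [← hp]
    refine (convex_convexHull ℝ _).sum_mem (fun i _ => ?_) ?_ (fun i _ => ?_)
    · fin_cases i <;> simp [w] <;> linarith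
    · simp [w, Fin.sum_univ_four]; ring
    · fin_cases i <;> exact subset_convexHull ℝ _ ⟨_, by simp [simplexVerts], rfl⟩

theorem mem_smul_simplexP_iff {t : ℝ} (ht : 0 ≤ t) {p : Fin 3 → ℝ} :
    p ∈ t • simplexP ↔ 0 ≤ p 0 + p 1 - p 2 ∧ 0 ≤ p 1 + p 2 - p 0 ∧ 0 ≤ p 0 + p 2 - p 1 ∧
      p 0 + p 1 + p 2 ≤ 2 * t := by
  rcases ht.eq_or_lt with rfl | ht
  · have hne : simplexP.Nonempty := ⟨0, by rw [simplexP_eq]; norm_num⟩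
    rw [Set.zero_smul_set hne, Set.mem_zero]
    refine ⟨by rintro rfl; norm_num, fun ⟨h1, h2, h3, h4⟩ => ?_⟩
    funext j
    fin_cases j <;> simp <;> linarith
  · have hpos : ∀ a : ℝ, 0 ≤ t⁻¹ * a ↔ 0 ≤ a := fun a => mul_nonneg_iff_of_pos_left (inv_pos.2 ht)
    rw [Set.mem_smul_set_iff_inv_smul_mem₀ ht.ne', simplexP_eq]
    simp only [Set.mem_ofPred_eq, Pi.smul_apply, smul_eq_mul, ← mul_add, ← mul_sub, hpos,
      inv_mul_le_iff₀ ht, mul_comm t 2]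

theorem mem_simplexEhrhartMonoid_iff {x : Fin 4 → ℤ} :
    x ∈ simplexEhrhartMonoid ↔ 0 ≤ x 3 ∧ 0 ≤ x 0 + x 1 - x 2 ∧ 0 ≤ x 1 + x 2 - x 0 ∧
      0 ≤ x 0 + x 2 - x 1 ∧ x 0 + x 1 + x 2 ≤ 2 * x 3 := by
  show 0 ≤ x 3 ∧ _ ↔ _
  refine and_congr_right fun h => ?_
  rw [mem_smul_simplexP_iff (by exact_mod_cast h)]
  simp only [realify, proj3]
  norm_cast

theorem simplexQ_lt_simplexEhrhartMonoid : simplexQ < simplexEhrhartMonoid := by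
  refine SetLike.lt_iff_le_and_exists.2 ⟨AddSubmonoid.closure_le.2 ?_, ![1,1,1,2], ?_, ?_⟩
  · intro y hy
    simp only [Set.mem_insert_iff, Set.mem_singleton_iff] at hy
    rcases hy with rfl | rfl | rfl | rfl <;> exact mem_simplexEhrhartMonoid_iff.2 (by decide)
  · exact mem_simplexEhrhartMonoid_iff.2 (by decide)
  · exact fun h => absurd (even_of_mem_simplexQ h) (by decide)

def ehrhartGens : Fin 5 → Fin 4 → ℤ :=
  ![![0,0,0,1], ![1,1,0,1], ![0,1,1,1], ![1,0,1,1], ![1,1,1,2]]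

theorem ehrhartGens_mem (i : Fin 5) : ehrhartGens i ∈ simplexEhrhartMonoid := by
  rw [mem_simplexEhrhartMonoid_iff]
  fin_cases i <;> decide

/-- Every point of the Ehrhart monoid is uniquely `∑ cᵢ • ehrhartGens i + e • (1,1,1,2)` with
`cᵢ ≥ 0` and `e ∈ {0, 1}`; `ehrhartParity` is `e` and `ehrhartCoeff` is `c`. -/
def ehrhartParity (x : Fin 4 → ℤ) : ℤ := (x 0 + x 1 + x 2) % 2

def ehrhartCoeff (x : Fin 4 → ℤ) : Fin 4 → ℤ :=
  ![x 3 - (x 0 + x 1 + x 2 + ehrhartParity x) / 2, (x 0 + x 1 - x 2 - ehrhartParity x) / 2,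
    (x 1 + x 2 - x 0 - ehrhartParity x) / 2, (x 0 + x 2 - x 1 - ehrhartParity x) / 2]

theorem ehrhartParity_nonneg (x : Fin 4 → ℤ) : 0 ≤ ehrhartParity x := by
  unfold ehrhartParity; omega

theorem ehrhartParity_add (x y : Fin 4 → ℤ) :
    ehrhartParity (x + y) = (ehrhartParity x + ehrhartParity y) % 2 := by
  simp only [ehrhartParity, Pi.add_apply]
  omega

theorem ehrhartCoeff_add (x y : Fin 4 → ℤ) (i : Fin 4) :
    ehrhartCoeff (x + y) i =
      ehrhartCoeff x i + ehrhartCoeff y i + (ehrhartParity x + ehrhartParity y) / 2 := by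
  fin_cases i <;> simp [ehrhartCoeff, ehrhartParity] <;> omega

theorem ehrhartCoeff_nonneg {x : Fin 4 → ℤ} (hx : x ∈ simplexEhrhartMonoid) (i : Fin 4) :
    0 ≤ ehrhartCoeff x i := by
  rw [mem_simplexEhrhartMonoid_iff] at hx
  fin_cases i <;> simp [ehrhartCoeff, ehrhartParity] <;> omega

theorem sum_ehrhartCoeff_smul (x : Fin 4 → ℤ) :
    ∑ i : Fin 4, ehrhartCoeff x i • ehrhartGens i.castSucc +
      ehrhartParity x • ehrhartGens 4 = x := by
  funext j
  fin_cases j <;> simp [ehrhartCoeff, ehrhartParity, ehrhartGens, Fin.sum_univ_four] <;> omega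

def ehrhartGen (i : Fin 5) : simplexEhrhartMonoid := ⟨ehrhartGens i, ehrhartGens_mem i⟩

theorem sum_ehrhartCoeff_smul_ehrhartGen (x : simplexEhrhartMonoid) :
    ∑ i : Fin 4, (ehrhartCoeff x i).toNat • ehrhartGen i.castSucc +
      (ehrhartParity x).toNat • ehrhartGen 4 = x := by
  apply Subtype.ext
  simp only [AddSubmonoid.coe_add, AddSubmonoid.coe_finsetSum, AddSubmonoidClass.coe_nsmul,
    ← natCast_zsmul, Int.toNat_of_nonneg (ehrhartCoeff_nonneg x.2 _),
    Int.toNat_of_nonneg (ehrhartParity_nonneg _)]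
  exact sum_ehrhartCoeff_smul x

theorem ehrhartGen_relation :
    ehrhartGen 0 + ehrhartGen 1 + ehrhartGen 2 + ehrhartGen 3 = 2 • ehrhartGen 4 :=
  Subtype.ext (by decide)

section Presentation

open MvPolynomial

variable (k : Type*) [CommRing k]

def simplexRelIdeal : Ideal (MvPolynomial (Fin 5) k) :=
  Ideal.span {X 0 * X 1 * X 2 * X 3 - X 4 ^ 2}

theorem mk_X_four_sq :
    Ideal.Quotient.mk (simplexRelIdeal k) (X 4) ^ 2 =
      ∏ i : Fin 4, Ideal.Quotient.mk (simplexRelIdeal k) (X i.castSucc) := by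
  have hprod : ∏ i : Fin 4, (X i.castSucc : MvPolynomial (Fin 5) k) = X 0 * X 1 * X 2 * X 3 := by
    simp [Fin.prod_univ_four]
  rw [← map_pow, ← map_prod, hprod, eq_comm, Ideal.Quotient.eq]
  exact Ideal.subset_span rfl

def ehrhartMonomial (x : Fin 4 → ℤ) : MvPolynomial (Fin 5) k ⧸ simplexRelIdeal k :=
  (∏ i : Fin 4, Ideal.Quotient.mk _ (X i.castSucc) ^ (ehrhartCoeff x i).toNat) *
    Ideal.Quotient.mk _ (X 4) ^ (ehrhartParity x).toNat

theorem ehrhartMonomial_add {x y : Fin 4 → ℤ} (hx : x ∈ simplexEhrhartMonoid)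
    (hy : y ∈ simplexEhrhartMonoid) :
    ehrhartMonomial k (x + y) = ehrhartMonomial k x * ehrhartMonomial k y := by
  have hex := ehrhartParity_nonneg x
  have hey := ehrhartParity_nonneg y
  have hc (i : Fin 4) : (ehrhartCoeff (x + y) i).toNat = (ehrhartCoeff x i).toNat +
      (ehrhartCoeff y i).toNat + ((ehrhartParity x).toNat + (ehrhartParity y).toNat) / 2 := by
    have hcx := ehrhartCoeff_nonneg hx i
    have hcy := ehrhartCoeff_nonneg hy i
    rw [ehrhartCoeff_add]
    omega
  have he : (ehrhartParity (x + y)).toNat =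
      ((ehrhartParity x).toNat + (ehrhartParity y).toNat) % 2 := by
    rw [ehrhartParity_add]
    omega
  simp only [ehrhartMonomial, prod_pow_mul_pow_mul_prod_pow_mul_pow (mk_X_four_sq k), hc, he]

theorem ehrhartMonomial_ehrhartGens (i : Fin 5) :
    ehrhartMonomial k (ehrhartGens i) = Ideal.Quotient.mk _ (X i) := by
  fin_cases i <;>
    simp [ehrhartMonomial, ehrhartCoeff, ehrhartParity, ehrhartGens, Fin.prod_univ_four]

def ehrhartMonomialHom :
    Multiplicative simplexEhrhartMonoid →* MvPolynomial (Fin 5) k ⧸ simplexRelIdeal k where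
  toFun x := ehrhartMonomial k x.toAdd
  map_one' := by simp [ehrhartMonomial, ehrhartCoeff, ehrhartParity, Fin.prod_univ_four]
  map_mul' x y := ehrhartMonomial_add k x.toAdd.2 y.toAdd.2

def ehrhartToPresentation :
    AddMonoidAlgebra k simplexEhrhartMonoid →ₐ[k] MvPolynomial (Fin 5) k ⧸ simplexRelIdeal k :=
  AddMonoidAlgebra.lift k _ _ (ehrhartMonomialHom k)

def presentationToEhrhart :
    MvPolynomial (Fin 5) k ⧸ simplexRelIdeal k →ₐ[k] AddMonoidAlgebra k simplexEhrhartMonoid :=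
  Ideal.Quotient.liftₐ _ (aeval fun i => AddMonoidAlgebra.single (ehrhartGen i) 1) fun a ha => by
    obtain ⟨b, rfl⟩ := Ideal.mem_span_singleton'.1 ha
    simp [ehrhartGen_relation]

theorem presentationToEhrhart_mk_X (i : Fin 5) :
    presentationToEhrhart k (Ideal.Quotient.mk _ (X i)) =
      AddMonoidAlgebra.single (ehrhartGen i) 1 := by
  rw [← Ideal.Quotient.mkₐ_eq_mk k, ← AlgHom.comp_apply, presentationToEhrhart,
    Ideal.Quotient.liftₐ_comp, aeval_X]

theorem ehrhartToPresentation_comp_presentationToEhrhart :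
    (ehrhartToPresentation k).comp (presentationToEhrhart k) = AlgHom.id k _ := by
  refine Ideal.Quotient.algHom_ext k (MvPolynomial.algHom_ext fun i => ?_)
  simp [presentationToEhrhart_mk_X, ehrhartToPresentation, ehrhartMonomialHom, ehrhartGen,
    ehrhartMonomial_ehrhartGens]

theorem presentationToEhrhart_comp_ehrhartToPresentation :
    (presentationToEhrhart k).comp (ehrhartToPresentation k) = AlgHom.id k _ := by
  refine AddMonoidAlgebra.algHom_ext (fun x => ?_) (Subsingleton.elim _ _)
  simp [ehrhartToPresentation, ehrhartMonomialHom, ehrhartMonomial, presentationToEhrhart_mk_X,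
    AddMonoidAlgebra.single_pow, AddMonoidAlgebra.single_mul_single,
    sum_ehrhartCoeff_smul_ehrhartGen]

def ehrhartEquivPresentation :
    AddMonoidAlgebra k simplexEhrhartMonoid ≃ₐ[k] MvPolynomial (Fin 5) k ⧸ simplexRelIdeal k :=
  AlgEquiv.ofAlgHom _ _ (ehrhartToPresentation_comp_presentationToEhrhart k)
    (presentationToEhrhart_comp_ehrhartToPresentation k)

end Presentation

open MvPolynomial in
/-- **Theorem.** For the simplex `P = conv{(0,0,0),(1,1,0),(0,1,1),(1,0,1)}`, the toric ring
`k[Q_P]` is a polynomial ring in 4 variables (and `Q_P` is its own normalization), while the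
Ehrhart ring of `P` is isomorphic to `k[X₁,X₂,X₃,X₄,Y]/(X₁X₂X₃X₄ − Y²)` and strictly
contains `k[Q_P]`. -/
theorem simplex_toricRing_ne_ehrhartRing (k : Type) [Field k] :
    Nonempty (AddMonoidAlgebra k simplexQ ≃ₐ[k] MvPolynomial (Fin 4) k) ∧
    saturation simplexQ = simplexQ ∧
    Nonempty (AddMonoidAlgebra k simplexEhrhartMonoid ≃ₐ[k]
      (MvPolynomial (Fin 5) k ⧸
        Ideal.span {(X 0 * X 1 * X 2 * X 3 - (X 4) ^ 2 : MvPolynomial (Fin 5) k)})) ∧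
    simplexQ < simplexEhrhartMonoid :=
  ⟨⟨AddMonoidAlgebra.domCongr k k simplexQEquiv.symm⟩, saturation_simplexQ,
    ⟨ehrhartEquivPresentation k⟩, simplexQ_lt_simplexEhrhartMonoid⟩

end MonoidHilbert
end
end

section
/- Let G_k be the graph consisting of a triangle (u_1,u_2,u_3), a triangle (u_4,u_5,u_6), and for each i = 1,…,k a path u_3 — v'_i — v_i — u_6 together with the edge u_3 — v_i (so edges u_3v'_i, v'_iv_i, v_iu_3, v_iu_6). Let Q = Q_{G_k} be its edge monoid with normalization Q̄, and let q = e_{u_1}+⋯+e_{u_6}. Then the set of holes satisfies Q̄ ∖ Q = q + Q', where Q' = Q_{G'} is the edge monoid of the graph G' obtained from G_k by deleting v_1,…,v_k and all incident edges. -/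
open scoped Classical

noncomputable section

open scoped Pointwise

namespace MonoidHilbert

/-- The vertex set of the graph `G_k`: six vertices `u₁,…,u₆`, then `v₁,…,v_k`,
then `v'₁,…,v'_k`. -/
abbrev GkV (k : ℕ) := Fin 6 ⊕ (Fin k ⊕ Fin k)

/-- The edges of `G_k`: the two triangles `(u₁,u₂,u₃)` and `(u₄,u₅,u₆)`, and for each `i`
the edges `u₃v'ᵢ`, `v'ᵢvᵢ`, `vᵢu₃`, `vᵢu₆`. -/
def GkEdges (k : ℕ) : Set (Sym2 (GkV k)) :=
  {s(Sum.inl 0, Sum.inl 1), s(Sum.inl 0, Sum.inl 2), s(Sum.inl 1, Sum.inl 2),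
   s(Sum.inl 3, Sum.inl 4), s(Sum.inl 3, Sum.inl 5), s(Sum.inl 4, Sum.inl 5)} ∪
  ⋃ i : Fin k,
    {s(Sum.inl 2, Sum.inr (Sum.inr i)), s(Sum.inr (Sum.inr i), Sum.inr (Sum.inl i)),
     s(Sum.inr (Sum.inl i), Sum.inl 2), s(Sum.inr (Sum.inl i), Sum.inl 5)}

/-- The graph `G_k` of the paper: two triangles joined through `k` paths. -/
def Gk (k : ℕ) : SimpleGraph (GkV k) := SimpleGraph.fromEdgeSet (GkEdges k)

/-- The graph `G'` obtained from `G_k` by deleting `v₁,…,v_k` and all incident edges. -/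
def Gk' (k : ℕ) : SimpleGraph (GkV k) :=
  SimpleGraph.fromEdgeSet
    ({s(Sum.inl 0, Sum.inl 1), s(Sum.inl 0, Sum.inl 2), s(Sum.inl 1, Sum.inl 2),
      s(Sum.inl 3, Sum.inl 4), s(Sum.inl 3, Sum.inl 5), s(Sum.inl 4, Sum.inl 5)} ∪
     ⋃ i : Fin k, {s(Sum.inl 2, Sum.inr (Sum.inr i))})

/-- The vector `q = e_{u₁}+⋯+e_{u₆}`. -/
def qHole (k : ℕ) : GkV k → ℤ := Sum.elim (fun _ => 1) (fun _ => 0)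

end MonoidHilbert

/-!
Write `x ∈ Q` as a nonnegative integer combination of edges, and let `D` be the total weight on
the edges `vᵢu₆` and `β` the total weight on the edges `v'ᵢvᵢ`. Once `D` and `β` are fixed, the
weights on the paths can be distributed freely, and what is left of `x` on each triangle is a
combination of its three edges iff its coordinates satisfy the triangle inequalities and have
even sum. Eliminating `β`, `x ∈ Q` iff `x ≥ 0`, `∑ x` is even and some
`D ∈ [bridgeLower x, bridgeUpper x]` has the parity of `x(u₄) + x(u₅) + x(u₆)`.

The bounds are positively homogeneous, so the interval is nonempty for `x ∈ Q̄`. All bounds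
except `0` and `∑ᵢ x(vᵢ)` have the parity of `x(u₄) + x(u₅) + x(u₆)`; hence for a hole the
interval is `{0}`, all `x(vᵢ)` vanish, that sum is odd, and `x - q` splits over the two triangles
and the edges `u₃v'ᵢ`. Conversely `q + Q' ⊆ Q̄` because `2q ∈ Q` and `q ∈ ℤQ`, while `q + y ∉ Q`
for `y ∈ Q'`: there `D` must be `0`, but `(q + y)(u₄) + (q + y)(u₅) + (q + y)(u₆)` is odd.
-/

theorem Finset.exists_sum_eq_of_le_sum {ι : Type*} [DecidableEq ι] (s : Finset ι)
    {cap : ι → ℤ} (hcap : ∀ i, 0 ≤ cap i) {n : ℤ} (hn : 0 ≤ n) (hns : n ≤ ∑ i ∈ s, cap i) :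
    ∃ f : ι → ℤ, (∀ i, 0 ≤ f i ∧ f i ≤ cap i) ∧ ∑ i ∈ s, f i = n := by
  induction s using Finset.induction_on generalizing n with
  | empty => exact ⟨0, fun i => ⟨le_rfl, hcap i⟩, by simp_all; omega⟩
  | insert a s ha ih =>
    rw [Finset.sum_insert ha] at hns
    have hs : 0 ≤ ∑ i ∈ s, cap i := Finset.sum_nonneg fun i _ => hcap i
    obtain ⟨f, hf, hfs⟩ := ih (n := n - min n (cap a)) (by omega) (by omega)
    refine ⟨Function.update f a (min n (cap a)), fun i => ?_, ?_⟩
    · rcases eq_or_ne i a with rfl | hi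
      · simp [hn, hcap i]
      · simpa [hi] using hf i
    · rw [Finset.sum_insert ha, Finset.sum_update_of_notMem ha]
      simp [hfs]

namespace MonoidHilbert

section EdgeMonoid

variable {V : Type*} {G H : SimpleGraph V}

theorem edgeVec_comm (a b : V) : edgeVec a b = edgeVec b a := by
  funext w
  simp only [edgeVec]
  ring

theorem edgeVec_mem_edgeMonoid {a b : V} (h : G.Adj a b) : edgeVec a b ∈ edgeMonoid G :=
  AddSubmonoid.subset_closure ⟨a, b, h, rfl⟩

theorem zsmul_edgeVec_mem_edgeMonoid {a b : V} (h : G.Adj a b) {c : ℤ} (hc : 0 ≤ c) :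
    c • edgeVec a b ∈ edgeMonoid G := by
  lift c to ℕ using hc
  rw [natCast_zsmul]
  exact AddSubmonoid.nsmul_mem _ (edgeVec_mem_edgeMonoid h) c

theorem edgeMonoid_mono (h : G ≤ H) : edgeMonoid G ≤ edgeMonoid H :=
  AddSubmonoid.closure_mono fun _ ⟨a, b, hab, hx⟩ => ⟨a, b, h hab, hx⟩

theorem edgeMonoid_fromEdgeSet_le {E : Set (Sym2 V)} {M : AddSubmonoid (V → ℤ)}
    (h : ∀ e ∈ E, Sym2.lift ⟨edgeVec, edgeVec_comm⟩ e ∈ M) :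
    edgeMonoid (SimpleGraph.fromEdgeSet E) ≤ M := by
  refine AddSubmonoid.closure_le.2 ?_
  rintro _ ⟨a, b, hab, rfl⟩
  exact h _ ((SimpleGraph.fromEdgeSet_adj E).1 hab).1

theorem nonneg_of_mem_edgeMonoid {x : V → ℤ} (hx : x ∈ edgeMonoid G) (w : V) : 0 ≤ x w := by
  induction hx using AddSubmonoid.closure_induction with
  | mem y hy =>
    obtain ⟨a, b, -, rfl⟩ := hy
    simp only [edgeVec]
    positivity
  | zero => rfl
  | add y z _ _ hy hz => exact add_nonneg hy hz

theorem nonneg_of_mem_saturation {x : V → ℤ} (hx : x ∈ saturation (edgeMonoid G)) (w : V) :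
    0 ≤ x w := by
  obtain ⟨-, n, hn, hnx⟩ := hx
  have := nonneg_of_mem_edgeMonoid hnx w
  rw [Pi.smul_apply, nsmul_eq_mul] at this
  exact nonneg_of_mul_nonneg_right this (by exact_mod_cast hn)

theorem eq_zero_of_mem_edgeMonoid {w : V} (hw : ∀ b, ¬G.Adj w b) {x : V → ℤ}
    (hx : x ∈ edgeMonoid G) : x w = 0 := by
  induction hx using AddSubmonoid.closure_induction with
  | mem y hy =>
    obtain ⟨a, b, hab, rfl⟩ := hy
    have hwa : w ≠ a := fun h => hw b (h ▸ hab)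
    have hwb : w ≠ b := fun h => hw a (h ▸ hab.symm)
    simp [edgeVec, hwa, hwb]
  | zero => rfl
  | add y z _ _ hy hz => simp [hy, hz]

theorem even_sum_of_mem_closure_edgeMonoid {T : Finset V}
    (hT : ∀ a b, G.Adj a b → (a ∈ T ↔ b ∈ T)) {x : V → ℤ}
    (hx : x ∈ AddSubgroup.closure (edgeMonoid G : Set (V → ℤ))) : Even (∑ w ∈ T, x w) := by
  induction hx using AddSubgroup.closure_induction with
  | mem y hy =>
    induction hy using AddSubmonoid.closure_induction with
    | mem z hz =>
      obtain ⟨a, b, hab, rfl⟩ := hz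
      simp only [edgeVec, Finset.sum_add_distrib, Finset.sum_ite_eq']
      simp only [← hT a b hab]
      split_ifs <;> decide
    | zero => simp
    | add y z _ _ hy hz => simpa [Finset.sum_add_distrib] using hy.add hz
  | zero => simp
  | add y z _ _ hy hz => simpa [Finset.sum_add_distrib] using hy.add hz
  | neg y _ hy => simpa using hy.neg

theorem single_add_single_add_single_mem_edgeMonoid [DecidableEq V] {a b c : V}
    (hab : G.Adj a b) (hac : G.Adj a c) (hbc : G.Adj b c) {p q r : ℤ} (hpqr : Even (p + q + r))
    (hr : |p - q| ≤ r) (hr' : r ≤ p + q) :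
    Pi.single a p + Pi.single b q + Pi.single c r ∈ edgeMonoid G := by
  obtain ⟨m, hm⟩ := hpqr
  rw [abs_le] at hr
  have hsum : Pi.single a p + Pi.single b q + Pi.single c r =
      (m - r) • edgeVec a b + (m - q) • edgeVec a c + (m - p) • edgeVec b c := by
    funext w
    have := hab.ne; have := hac.ne; have := hbc.ne
    by_cases hwa : w = a <;> by_cases hwb : w = b <;> by_cases hwc : w = c <;>
      simp_all [edgeVec] <;> omega
  rw [hsum]
  exact add_mem (add_mem (zsmul_edgeVec_mem_edgeMonoid hab (by omega))
    (zsmul_edgeVec_mem_edgeMonoid hac (by omega))) (zsmul_edgeVec_mem_edgeMonoid hbc (by omega))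

end EdgeMonoid

namespace GkV

variable {k : ℕ}

/-- `u j` is the paper's `u_{j+1}`: the triangles are `u 0, u 1, u 2` and `u 3, u 4, u 5`. -/
abbrev u (j : Fin 6) : GkV k := Sum.inl j

abbrev v (i : Fin k) : GkV k := Sum.inr (Sum.inl i)

abbrev v' (i : Fin k) : GkV k := Sum.inr (Sum.inr i)

end GkV

open GkV

section Gk

variable {k : ℕ}

def sumV (x : GkV k → ℤ) : ℤ := ∑ i, x (v i)

def sumV' (x : GkV k → ℤ) : ℤ := ∑ i, x (v' i)

def sumMin (x : GkV k → ℤ) : ℤ := ∑ i, min (x (v i)) (x (v' i))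

/-- With `x` written as a nonnegative combination of edges, `D` the total weight on the edges
`vᵢu₆` and `β ≤ sumMin x` the total weight on the edges `v'ᵢvᵢ`, the remaining coordinates
`x(u₄), x(u₅), x(u₆) - D` and `x(u₁), x(u₂), x(u₃) - (sumV x + sumV' x - 2β - D)` must satisfy
the triangle inequalities; eliminating `β` leaves `bridgeLower x ≤ D ≤ bridgeUpper x`. -/
def bridgeLower (x : GkV k → ℤ) : ℤ :=
  max 0 (max (x (u 5) - x (u 3) - x (u 4))
    (|x (u 0) - x (u 1)| - x (u 2) + sumV x + sumV' x - 2 * sumMin x))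

def bridgeUpper (x : GkV k → ℤ) : ℤ :=
  min (x (u 5) - |x (u 3) - x (u 4)|) (min (sumV x)
    (min (x (u 0) + x (u 1) - x (u 2) + sumV x + sumV' x)
      (x (u 2) + sumV x - sumV' x - |x (u 0) - x (u 1)|)))

theorem sum_GkV (x : GkV k → ℤ) :
    ∑ w, x w = x (u 0) + x (u 1) + x (u 2) + x (u 3) + x (u 4) + x (u 5) + sumV x + sumV' x := by
  simp only [Fintype.sum_sum_type, Fin.sum_univ_six, sumV, sumV']
  ring

theorem sumV_add (x y : GkV k → ℤ) : sumV (x + y) = sumV x + sumV y := by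
  simp [sumV, Finset.sum_add_distrib]

theorem sumV'_add (x y : GkV k → ℤ) : sumV' (x + y) = sumV' x + sumV' y := by
  simp [sumV', Finset.sum_add_distrib]

theorem sumMin_add_le (x y : GkV k → ℤ) : sumMin x + sumMin y ≤ sumMin (x + y) := by
  simp only [sumMin, ← Finset.sum_add_distrib, Pi.add_apply]
  gcongr with i
  exact le_min (add_le_add (min_le_left _ _) (min_le_left _ _))
    (add_le_add (min_le_right _ _) (min_le_right _ _))

theorem sumV_nsmul (n : ℕ) (x : GkV k → ℤ) : sumV (n • x) = n * sumV x := by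
  simp [sumV, Finset.mul_sum]

theorem sumV'_nsmul (n : ℕ) (x : GkV k → ℤ) : sumV' (n • x) = n * sumV' x := by
  simp [sumV', Finset.mul_sum]

theorem sumMin_nsmul (n : ℕ) (x : GkV k → ℤ) : sumMin (n • x) = n * sumMin x := by
  simp [sumMin, Finset.mul_sum, mul_min_of_nonneg]

theorem sumMin_nonneg {x : GkV k → ℤ} (hx : ∀ w, 0 ≤ x w) : 0 ≤ sumMin x :=
  Finset.sum_nonneg fun _ _ => le_min (hx _) (hx _)

theorem sumMin_le_sumV (x : GkV k → ℤ) : sumMin x ≤ sumV x :=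
  Finset.sum_le_sum fun _ _ => min_le_left _ _

theorem bridgeLower_le_iff (x : GkV k → ℤ) (D : ℤ) :
    bridgeLower x ≤ D ↔ 0 ≤ D ∧ x (u 5) - x (u 3) - x (u 4) ≤ D ∧
      x (u 0) - x (u 1) - x (u 2) + sumV x + sumV' x - 2 * sumMin x ≤ D ∧
      x (u 1) - x (u 0) - x (u 2) + sumV x + sumV' x - 2 * sumMin x ≤ D := by
  simp only [bridgeLower, max_le_iff, abs_eq_max_neg]
  omega

theorem le_bridgeUpper_iff (x : GkV k → ℤ) (D : ℤ) :
    D ≤ bridgeUpper x ↔ D ≤ x (u 5) - x (u 3) + x (u 4) ∧ D ≤ x (u 5) + x (u 3) - x (u 4) ∧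
      D ≤ sumV x ∧ D ≤ x (u 0) + x (u 1) - x (u 2) + sumV x + sumV' x ∧
      D ≤ x (u 2) + sumV x - sumV' x - x (u 0) + x (u 1) ∧
      D ≤ x (u 2) + sumV x - sumV' x + x (u 0) - x (u 1) := by
  simp only [bridgeUpper, le_min_iff, abs_eq_max_neg]
  omega

theorem bridgeLower_nsmul (n : ℕ) (x : GkV k → ℤ) :
    bridgeLower (n • x) = n * bridgeLower x := by
  have hn : (0 : ℤ) ≤ n := n.cast_nonneg
  rw [bridgeLower, bridgeLower, sumV_nsmul, sumV'_nsmul, sumMin_nsmul]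
  simp only [Pi.smul_apply, nsmul_eq_mul, mul_max_of_nonneg _ _ hn, ← mul_sub, abs_mul,
    abs_of_nonneg hn]
  ring_nf

theorem bridgeUpper_nsmul (n : ℕ) (x : GkV k → ℤ) :
    bridgeUpper (n • x) = n * bridgeUpper x := by
  have hn : (0 : ℤ) ≤ n := n.cast_nonneg
  rw [bridgeUpper, bridgeUpper, sumV_nsmul, sumV'_nsmul]
  simp only [Pi.smul_apply, nsmul_eq_mul, mul_min_of_nonneg _ _ hn, ← mul_sub, abs_mul,
    abs_of_nonneg hn]
  ring_nf

def bridgeSubmonoid : AddSubmonoid (GkV k → ℤ) where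
  carrier := {x | ∃ D, bridgeLower x ≤ D ∧ D ≤ bridgeUpper x ∧
    Even (D + x (u 3) + x (u 4) + x (u 5))}
  zero_mem' := ⟨0, by simp [bridgeLower, bridgeUpper, sumV, sumV', sumMin]⟩
  add_mem' := by
    rintro x y ⟨D, hD⟩ ⟨E, hE⟩
    have := sumMin_add_le x y
    simp only [bridgeLower_le_iff, le_bridgeUpper_iff, Int.even_iff, sumV_add, sumV'_add,
      Pi.add_apply, Set.mem_ofPred_eq] at hD hE ⊢
    exact ⟨D + E, by omega⟩

theorem edgeMonoid_Gk_le_bridgeSubmonoid : edgeMonoid (Gk k) ≤ bridgeSubmonoid := by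
  refine edgeMonoid_fromEdgeSet_le fun e he => ?_
  simp only [GkEdges, Set.mem_union, Set.mem_insert_iff, Set.mem_singleton_iff,
    Set.mem_iUnion] at he
  rcases he with (rfl | rfl | rfl | rfl | rfl | rfl) | ⟨i, rfl | rfl | rfl | rfl⟩
  -- the edge `vᵢu₆` has `D = 1`, every other edge `D = 0`
  rotate_right
  · exact ⟨1, by
      simp [bridgeLower_le_iff, le_bridgeUpper_iff, sumV, sumV', sumMin, edgeVec]; positivity⟩
  all_goals
    exact ⟨0, by
      simp [bridgeLower_le_iff, le_bridgeUpper_iff, sumV, sumV', sumMin, edgeVec] <;> positivity⟩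

theorem bridgeLower_le_bridgeUpper_of_mem_saturation {x : GkV k → ℤ}
    (hx : x ∈ saturation (edgeMonoid (Gk k))) : bridgeLower x ≤ bridgeUpper x := by
  obtain ⟨-, n, hn, hnx⟩ := hx
  obtain ⟨D, hlo, hhi, -⟩ := edgeMonoid_Gk_le_bridgeSubmonoid hnx
  rw [bridgeLower_nsmul] at hlo
  rw [bridgeUpper_nsmul] at hhi
  exact le_of_mul_le_mul_left (hlo.trans hhi) (by exact_mod_cast hn)

def pathGadget (i : Fin k) (p q b d : ℤ) : GkV k → ℤ :=
  (p - b) • edgeVec (u 2) (v' i) + b • edgeVec (v' i) (v i) + (q - b - d) • edgeVec (v i) (u 2) +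
    d • edgeVec (v i) (u 5)

theorem pathGadget_mem_edgeMonoid (i : Fin k) {p q b d : ℤ} (hb : 0 ≤ b) (hbp : b ≤ p)
    (hd : 0 ≤ d) (hq : b + d ≤ q) : pathGadget i p q b d ∈ edgeMonoid (Gk k) :=
  add_mem (add_mem (add_mem
    (zsmul_edgeVec_mem_edgeMonoid (by simp [Gk, GkEdges]) (by omega))
    (zsmul_edgeVec_mem_edgeMonoid (by simp [Gk, GkEdges]) hb))
    (zsmul_edgeVec_mem_edgeMonoid (by simp [Gk, GkEdges]) (by omega)))
    (zsmul_edgeVec_mem_edgeMonoid (by simp [Gk, GkEdges]) hd)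

theorem eq_triangles_add_sum_pathGadget (x : GkV k → ℤ) (b d : Fin k → ℤ) :
    x = (Pi.single (u 0) (x (u 0)) + Pi.single (u 1) (x (u 1)) +
        Pi.single (u 2) (x (u 2) - sumV x - sumV' x + 2 * ∑ i, b i + ∑ i, d i)) +
      (Pi.single (u 3) (x (u 3)) + Pi.single (u 4) (x (u 4)) +
        Pi.single (u 5) (x (u 5) - ∑ i, d i)) +
      ∑ i, pathGadget i (x (v' i)) (x (v i)) (b i) (d i) := by
  funext w
  rcases w with j | i | i
  · fin_cases j <;>
      simp [pathGadget, edgeVec, Finset.sum_apply, sumV, sumV', Finset.sum_add_distrib,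
        Finset.sum_sub_distrib]
    ring
  · simp [pathGadget, edgeVec, Finset.sum_apply, Finset.sum_add_distrib]
    ring
  · simp [pathGadget, edgeVec, Finset.sum_apply, Finset.sum_add_distrib]

theorem exists_pathWeights {x : GkV k → ℤ} (hx : ∀ w, 0 ≤ x w) {β D : ℤ} (hβ : 0 ≤ β)
    (hβx : β ≤ sumMin x) (hD : 0 ≤ D) (hβD : β + D ≤ sumV x) :
    ∃ b d : Fin k → ℤ, (∀ i, 0 ≤ b i ∧ b i ≤ x (v' i) ∧ 0 ≤ d i ∧ b i + d i ≤ x (v i)) ∧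
      ∑ i, b i = β ∧ ∑ i, d i = D := by
  obtain ⟨b, hb, hbβ⟩ := Finset.univ.exists_sum_eq_of_le_sum
    (fun i => le_min (hx (v i)) (hx (v' i))) hβ hβx
  have hbv (i : Fin k) : b i ≤ x (v i) := (hb i).2.trans (min_le_left _ _)
  obtain ⟨d, hd, hdD⟩ := Finset.univ.exists_sum_eq_of_le_sum (cap := fun i => x (v i) - b i)
    (fun i => sub_nonneg.2 (hbv i)) hD
    (by rw [Finset.sum_sub_distrib, hbβ]; exact le_sub_iff_add_le'.2 hβD)
  exact ⟨b, d, fun i => ⟨(hb i).1, (hb i).2.trans (min_le_right _ _), (hd i).1,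
    by linarith [(hd i).2]⟩, hbβ, hdD⟩

theorem mem_edgeMonoid_Gk_of_bridge {x : GkV k → ℤ} (hx : ∀ w, 0 ≤ x w)
    (heven : Even (∑ w, x w)) {D : ℤ} (hlo : bridgeLower x ≤ D) (hhi : D ≤ bridgeUpper x)
    (hD : Even (D + x (u 3) + x (u 4) + x (u 5))) : x ∈ edgeMonoid (Gk k) := by
  rw [sum_GkV] at heven
  rw [Int.even_iff] at heven hD
  have hmin := sumMin_nonneg hx
  have hminV := sumMin_le_sumV x
  have h0 := hx (u 0)
  have h1 := hx (u 1)
  rw [bridgeLower_le_iff] at hlo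
  rw [le_bridgeUpper_iff] at hhi
  -- the least `β` allowed by the first triangle
  obtain ⟨β, hβ, hβx, hβD, ht⟩ : ∃ β, 0 ≤ β ∧ β ≤ sumMin x ∧ β + D ≤ sumV x ∧
      |x (u 0) - x (u 1)| ≤ x (u 2) - sumV x - sumV' x + 2 * β + D ∧
      x (u 2) - sumV x - sumV' x + 2 * β + D ≤ x (u 0) + x (u 1) :=
    ⟨max 0 ((|x (u 0) - x (u 1)| - x (u 2) + sumV x + sumV' x - D) / 2), by
      simp only [abs_eq_max_neg]; omega⟩
  obtain ⟨b, d, hbd, hb, hd⟩ := exists_pathWeights hx hβ hβx hlo.1 hβD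
  rw [eq_triangles_add_sum_pathGadget x b d, hb, hd]
  refine add_mem (add_mem ?_ ?_) (sum_mem fun i _ => pathGadget_mem_edgeMonoid i
    (hbd i).1 (hbd i).2.1 (hbd i).2.2.1 (hbd i).2.2.2)
  · exact single_add_single_add_single_mem_edgeMonoid (by simp [Gk, GkEdges])
      (by simp [Gk, GkEdges]) (by simp [Gk, GkEdges]) (by rw [Int.even_iff]; omega) ht.1 ht.2
  · exact single_add_single_add_single_mem_edgeMonoid (by simp [Gk, GkEdges])
      (by simp [Gk, GkEdges]) (by simp [Gk, GkEdges]) (by rw [Int.even_iff]; omega)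
      (abs_le.2 ⟨by omega, by omega⟩) (by omega)

theorem sub_qHole_mem_edgeMonoid_Gk' {x : GkV k → ℤ} (hx : ∀ w, 0 ≤ x w)
    (heven : Even (∑ w, x w)) (hle : bridgeLower x ≤ bridgeUpper x)
    (hodd : ∀ D, bridgeLower x ≤ D → D ≤ bridgeUpper x →
      ¬Even (D + x (u 3) + x (u 4) + x (u 5))) :
    x - qHole k ∈ edgeMonoid (Gk' k) := by
  have hL := hodd _ le_rfl hle
  have hL' : ¬bridgeLower x + 1 ≤ bridgeUpper x := fun h =>
    hodd _ (by omega) h (by rw [Int.even_iff] at hL ⊢; omega)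
  rw [sum_GkV] at heven
  rw [Int.even_iff] at heven hL
  have hmin := sumMin_nonneg hx
  have hminV := sumMin_le_sumV x
  simp only [bridgeLower, bridgeUpper, abs_eq_max_neg] at hle hL hL'
  -- all bounds but `0` and `sumV x` have the parity of `x (u 3) + x (u 4) + x (u 5)`,
  -- so `bridgeLower x = bridgeUpper x = 0 = sumV x`
  obtain ⟨hsV, hp, h₁, h₂, h₃, h₄, h₅, h₆⟩ : sumV x = 0 ∧ (x (u 3) + x (u 4) + x (u 5)) % 2 = 1 ∧
      x (u 5) - x (u 3) - x (u 4) ≤ -1 ∧ x (u 3) - x (u 4) ≤ x (u 5) - 1 ∧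
      x (u 4) - x (u 3) ≤ x (u 5) - 1 ∧ x (u 0) - x (u 1) ≤ x (u 2) - sumV' x - 1 ∧
      x (u 1) - x (u 0) ≤ x (u 2) - sumV' x - 1 ∧ x (u 2) - sumV' x ≤ x (u 0) + x (u 1) - 1 := by
    omega
  clear hle hL hL'
  have hv (i : Fin k) : x (v i) = 0 :=
    (Finset.sum_eq_zero_iff_of_nonneg fun i _ => hx (v i)).1 hsV i (Finset.mem_univ i)
  have hqV : sumV (x - qHole k) = 0 := by simp [sumV, qHole, hv]
  have hqV' : sumV' (x - qHole k) = sumV' x := by simp [sumV', qHole]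
  rw [eq_triangles_add_sum_pathGadget (x - qHole k) 0 0, hqV, hqV']
  simp only [Pi.zero_apply, Finset.sum_const_zero, mul_zero, add_zero, sub_zero, Pi.sub_apply,
    qHole, Sum.elim_inl, Sum.elim_inr]
  refine add_mem (add_mem ?_ ?_) (sum_mem fun i _ => ?_)
  · exact single_add_single_add_single_mem_edgeMonoid (by simp [Gk']) (by simp [Gk'])
      (by simp [Gk']) (by rw [Int.even_iff]; omega) (abs_le.2 ⟨by omega, by omega⟩) (by omega)
  · exact single_add_single_add_single_mem_edgeMonoid (by simp [Gk']) (by simp [Gk'])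
      (by simp [Gk']) (by rw [Int.even_iff]; omega) (abs_le.2 ⟨by omega, by omega⟩) (by omega)
  · simp only [pathGadget, hv, sub_zero, zero_smul, add_zero]
    exact zsmul_edgeVec_mem_edgeMonoid (by simp [Gk']) (hx _)

theorem Gk'_le_Gk : Gk' k ≤ Gk k :=
  SimpleGraph.fromEdgeSet_mono <| Set.union_subset_union_right _ <|
    Set.iUnion_mono fun _ => by simp

theorem qHole_mem_closure (hk : 0 < k) :
    qHole k ∈ AddSubgroup.closure (edgeMonoid (Gk k) : Set (GkV k → ℤ)) := by
  let i : Fin k := ⟨0, hk⟩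
  have hq : qHole k = edgeVec (u 0) (u 1) + edgeVec (u 3) (u 4) + edgeVec (v i) (u 5) +
      edgeVec (u 2) (v' i) - edgeVec (v' i) (v i) := by
    funext w
    rcases w with j | j | j
    · fin_cases j <;> simp [qHole, edgeVec]
    all_goals by_cases hj : j = i <;> simp [qHole, edgeVec, hj]
  have hmem {a b : GkV k} (h : (Gk k).Adj a b) :
      edgeVec a b ∈ AddSubgroup.closure (edgeMonoid (Gk k) : Set (GkV k → ℤ)) :=
    AddSubgroup.subset_closure (edgeVec_mem_edgeMonoid h)
  rw [hq]
  exact sub_mem (add_mem (add_mem (add_mem (hmem (by simp [Gk, GkEdges]))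
    (hmem (by simp [Gk, GkEdges]))) (hmem (by simp [Gk, GkEdges])))
    (hmem (by simp [Gk, GkEdges]))) (hmem (by simp [Gk, GkEdges]))

theorem two_nsmul_qHole_mem : 2 • qHole k ∈ edgeMonoid (Gk k) := by
  have hq : 2 • qHole k = (Pi.single (u 0) 2 + Pi.single (u 1) 2 + Pi.single (u 2) 2) +
      (Pi.single (u 3) 2 + Pi.single (u 4) 2 + Pi.single (u 5) 2) := by
    funext w
    rcases w with j | j | j
    · fin_cases j <;> simp [qHole]
    all_goals simp [qHole]
  rw [hq]
  exact add_mem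
    (single_add_single_add_single_mem_edgeMonoid (by simp [Gk, GkEdges])
      (by simp [Gk, GkEdges]) (by simp [Gk, GkEdges]) (by decide) (by simp) (by simp))
    (single_add_single_add_single_mem_edgeMonoid (by simp [Gk, GkEdges])
      (by simp [Gk, GkEdges]) (by simp [Gk, GkEdges]) (by decide) (by simp) (by simp))

theorem qHole_add_mem_saturation (hk : 0 < k) {y : GkV k → ℤ} (hy : y ∈ edgeMonoid (Gk' k)) :
    qHole k + y ∈ saturation (edgeMonoid (Gk k)) := by
  have hy' := edgeMonoid_mono Gk'_le_Gk hy
  refine ⟨add_mem (qHole_mem_closure hk) (AddSubgroup.subset_closure hy'), 2, two_pos, ?_⟩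
  rw [smul_add]
  exact add_mem two_nsmul_qHole_mem (AddSubmonoid.nsmul_mem _ hy' 2)

theorem qHole_add_notMem_edgeMonoid {y : GkV k → ℤ} (hy : y ∈ edgeMonoid (Gk' k)) :
    qHole k + y ∉ edgeMonoid (Gk k) := by
  intro h
  obtain ⟨D, hlo, hhi, hD⟩ := edgeMonoid_Gk_le_bridgeSubmonoid h
  have hv (i : Fin k) : y (v i) = 0 := eq_zero_of_mem_edgeMonoid (by simp [Gk']) hy
  have hT : Even (∑ w ∈ {u 3, u 4, u 5}, y w) := by
    refine even_sum_of_mem_closure_edgeMonoid (fun a b hab => ?_)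
      (AddSubgroup.subset_closure hy)
    simp only [Gk', SimpleGraph.fromEdgeSet_adj, Set.mem_union, Set.mem_insert_iff,
      Set.mem_singleton_iff, Set.mem_iUnion, Sym2.eq_iff] at hab
    obtain ⟨(h | h | h | h | h | h) | ⟨i, h⟩, -⟩ := hab <;>
      obtain ⟨rfl, rfl⟩ | ⟨rfl, rfl⟩ := h <;> simp
  have hV : sumV (qHole k + y) = 0 := by simp [sumV, qHole, hv]
  rw [bridgeLower_le_iff] at hlo
  rw [le_bridgeUpper_iff, hV] at hhi
  rw [Finset.sum_insert (by simp), Finset.sum_pair (by simp)] at hT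
  simp only [Pi.add_apply, qHole, Sum.elim_inl] at hD
  rw [Int.even_iff] at hT hD
  omega

end Gk

/-- **Theorem.** For `Q = Q_{G_k}` with normalization `Q̄` and `q = e_{u₁}+⋯+e_{u₆}`,
the set of holes satisfies `Q̄ ∖ Q = q + Q'`, where `Q' = Q_{G'}` is the edge monoid of the
graph obtained from `G_k` by deleting `v₁,…,v_k` and all incident edges. -/
theorem gk_holes_eq (k : ℕ) (hk : 0 < k) :
    (saturation (edgeMonoid (Gk k)) : Set (GkV k → ℤ)) \ (edgeMonoid (Gk k) : Set (GkV k → ℤ))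
      = (fun x => qHole k + x) '' (edgeMonoid (Gk' k) : Set (GkV k → ℤ)) := by
  ext x
  constructor
  · rintro ⟨hsat, hx⟩
    have hpos := nonneg_of_mem_saturation hsat
    have heven : Even (∑ w, x w) :=
      even_sum_of_mem_closure_edgeMonoid (by simp) hsat.1
    refine ⟨x - qHole k, sub_qHole_mem_edgeMonoid_Gk' hpos heven
      (bridgeLower_le_bridgeUpper_of_mem_saturation hsat)
      fun D hlo hhi hD => hx (mem_edgeMonoid_Gk_of_bridge hpos heven hlo hhi hD), ?_⟩
    exact add_sub_cancel (qHole k) x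
  · rintro ⟨y, hy, rfl⟩
    exact ⟨qHole_add_mem_saturation hk hy, qHole_add_notMem_edgeMonoid hy⟩

end MonoidHilbert
end
end

section
/- For the monoid R_m generated by (0,2m+3),(m+1,m+2),(m+2,m+1),(2m+3,0) in Z_{≥0}², the h-polynomial of k[R_m] is h_{R_m}(t) = 1 + 2t + 2t² + ⋯ + 2t^{m+1}. Consequently deg(h_{R_m}(t)) − deg(h_{R̄_m}(t)) = m, so the degree of the h-polynomial of a monoid algebra can exceed that of its normalization by an arbitrary amount. -/
/-!
A sum of `n` generators of `R_m` is determined by its first coordinate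
`u (m + 1) + w (m + 2)`, where `u` and `w` count the summands `(m+1, m+2)`, resp. `(m+2, m+1)`,
the generator `(2m+3, 0)` counting as one of each; every pair `0 ≤ u, w ≤ n` occurs. As `m + 1`
and `m + 2` are coprime, the pairs giving the same value form chains along `(m+2, -(m+1))` in the
square `[0, n]²`, so there are `(n + 1)² - (n - m - 1)(n - m)` values, one less than the number of
pairs for each pair that can be shifted inside the square. Hence the Hilbert function is
`(n + 1)²` up to `n = m + 1` and linear of slope `2m + 3` from `n = m` on, and its second
differences are `h_k = 2` for `1 ≤ k ≤ m + 1` and `0` beyond. The saturation consists of all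
lattice points of the closed positive quadrant of degree divisible by `2m + 3`, whose
h-polynomial is `1 + (2m + 2) t`.
-/

open scoped Classical

noncomputable section

namespace MonoidHilbert

/-- The monoid `R_m ⊂ ℤ²` generated by `(0,2m+3), (m+1,m+2), (m+2,m+1), (2m+3,0)`. -/
def Rm (m : ℕ) : AddSubmonoid (Fin 2 → ℤ) :=
  AddSubmonoid.closure
    {![(0 : ℤ), 2 * m + 3], ![(m : ℤ) + 1, m + 2], ![(m : ℤ) + 2, m + 1], ![(2 : ℤ) * m + 3, 0]}

/-- The Hilbert series of `S ⊆ ℤ²` in the grading where `(x,y)` has degree `(x+y)/(2m+3)`. -/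
def rmHilbSeries (m : ℕ) (S : Set (Fin 2 → ℤ)) : PowerSeries ℤ :=
  PowerSeries.mk fun n =>
    (Nat.card {x : Fin 2 → ℤ // x ∈ S ∧ x 0 + x 1 = (2 * m + 3 : ℤ) * n} : ℤ)

/-- Membership in the support of `C r` forces the zero exponent. -/
private lemma c_support (k : Type) [Field k] (r : k) {d : Fin 2 →₀ ℕ}
    (hd : d ∈ (MvPolynomial.C (σ := Fin 2) r).support) : d = 0 := by
  by_contra h
  have : MvPolynomial.coeff d (MvPolynomial.C (σ := Fin 2) r) = 0 := by
    rw [MvPolynomial.coeff_C]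
    exact if_neg fun h0 => h h0.symm
  exact (MvPolynomial.mem_support_iff.mp hd) this

/-- The `n`-th Veronese subring of `k[X,Y]`: the span of all monomials whose total degree is
divisible by `n`. -/
def veronese (k : Type) [Field k] (n : ℕ) : Subalgebra k (MvPolynomial (Fin 2) k) where
  carrier := {p | ∀ d ∈ p.support, n ∣ d.sum fun _ e => e}
  zero_mem' := by intro d hd; simp at hd
  one_mem' := by
    intro d hd
    rw [show (1 : MvPolynomial (Fin 2) k) = MvPolynomial.C 1 by simp] at hd
    rw [c_support k 1 hd]
    simp
  add_mem' := by
    intro p q hp hq d hd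
    rcases Finset.mem_union.mp (MvPolynomial.support_add (p := p) (q := q) hd) with h | h
    · exact hp d h
    · exact hq d h
  mul_mem' := by
    intro p q hp hq d hd
    have hsub := MvPolynomial.support_mul (p := p) (q := q) hd
    rcases Finset.mem_add.mp hsub with ⟨a, ha, b, hb, rfl⟩
    have : (a + b).sum (fun _ e => e) = a.sum (fun _ e => e) + b.sum (fun _ e => e) :=
      Finsupp.sum_add_index' (fun _ => rfl) (fun _ _ _ => rfl)
    rw [this]
    exact dvd_add (hp a ha) (hq b hb)
  algebraMap_mem' := by
    intro r d hd
    have : d = 0 := c_support k r (by simpa using hd)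
    rw [this]
    simp

end MonoidHilbert

namespace MonoidHilbert

open Finset Polynomial

section GridValues

variable {a b : ℕ}

def gridValue (a b : ℕ) (p : ℕ × ℕ) : ℤ := p.1 * a + p.2 * b

abbrev grid (n : ℕ) : Finset (ℕ × ℕ) := range (n + 1) ×ˢ range (n + 1)

-- Each fibre of `gridValue a b` on the grid is a chain along `(b, -a)`; these are the chain ends.
def gridReps (a b n : ℕ) : Finset (ℕ × ℕ) := (grid n).filter fun p => ¬(p.1 + b ≤ n ∧ a ≤ p.2)

lemma shiftable_of_gridValue_eq {n : ℕ} (hb : 0 < b) (hab : a.Coprime b) {p q : ℕ × ℕ}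
    (hq : q ∈ grid n) (hpq : gridValue a b p = gridValue a b q) (hlt : p.1 < q.1) :
    p.1 + b ≤ n ∧ a ≤ p.2 := by
  simp only [grid, mem_product, mem_range] at hq
  simp only [gridValue] at hpq
  have hdvd : (b : ℤ) ∣ (q.1 - p.1 : ℤ) * a := ⟨p.2 - q.2, by linear_combination -hpq⟩
  obtain ⟨k, hk⟩ := (Nat.isCoprime_iff_coprime.mpr hab).symm.dvd_of_dvd_mul_right hdvd
  have hk1 : 1 ≤ k := by
    by_contra! h
    have : (b : ℤ) * k ≤ 0 := mul_nonpos_of_nonneg_of_nonpos (by positivity) (by omega)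
    omega
  have hv : (p.2 : ℤ) - q.2 = k * a :=
    mul_right_cancel₀ (by positivity : (b : ℤ) ≠ 0) (by linear_combination hpq + a * hk)
  constructor
  · have : (b : ℤ) ≤ b * k := le_mul_of_one_le_right (by positivity) hk1
    omega
  · have : (a : ℤ) ≤ k * a := le_mul_of_one_le_left (by positivity) hk1
    omega

lemma injOn_gridValue_gridReps {n : ℕ} (hb : 0 < b) (hab : a.Coprime b) :
    Set.InjOn (gridValue a b) (gridReps a b n) := by
  intro p hp q hq hpq
  rw [mem_coe, gridReps, mem_filter] at hp hq
  rcases lt_trichotomy p.1 q.1 with hlt | heq | hgt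
  · exact absurd (shiftable_of_gridValue_eq hb hab hq.1 hpq hlt) hp.2
  · have : (p.2 : ℤ) * b = q.2 * b := by simpa [gridValue, heq] using hpq
    have := mul_right_cancel₀ (by positivity : (b : ℤ) ≠ 0) this
    exact Prod.ext heq (by exact_mod_cast this)
  · exact absurd (shiftable_of_gridValue_eq hb hab hp.1 hpq.symm hgt) hq.2

lemma exists_mem_gridReps_gridValue_eq {n : ℕ} (ha : 0 < a) {p : ℕ × ℕ} (hp : p ∈ grid n) :
    ∃ q ∈ gridReps a b n, gridValue a b q = gridValue a b p := by
  obtain ⟨q, hq, hmin⟩ := ((grid n).filter (gridValue a b · = gridValue a b p)).exists_min_image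
    Prod.snd ⟨p, mem_filter.mpr ⟨hp, rfl⟩⟩
  rw [mem_filter] at hq
  refine ⟨q, mem_filter.mpr ⟨hq.1, fun hshift => ?_⟩, hq.2⟩
  have hmem : (q.1 + b, q.2 - a) ∈ (grid n).filter (gridValue a b · = gridValue a b p) := by
    simp only [grid, mem_filter, mem_product, mem_range] at hq ⊢
    refine ⟨⟨by omega, by omega⟩, ?_⟩
    rw [← hq.2]
    simp only [gridValue]
    push_cast [hshift.2]
    ring
  have := hmin _ hmem
  omega

theorem card_image_gridValue (ha : 0 < a) (hb : 0 < b) (hab : a.Coprime b) (n : ℕ) :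
    #((grid n).image (gridValue a b)) + (n + 1 - b) * (n + 1 - a) = (n + 1) ^ 2 := by
  have himage : (grid n).image (gridValue a b) = (gridReps a b n).image (gridValue a b) := by
    refine (image_subset_image (filter_subset _ _)).antisymm' fun x hx => ?_
    obtain ⟨p, hp, rfl⟩ := mem_image.mp hx
    obtain ⟨q, hq, hqp⟩ := exists_mem_gridReps_gridValue_eq (b := b) ha hp
    exact mem_image.mpr ⟨q, hq, hqp⟩
  have hshiftable : (grid n).filter (fun p => p.1 + b ≤ n ∧ a ≤ p.2)
      = range (n + 1 - b) ×ˢ Ico a (n + 1) := by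
    ext p
    simp only [grid, mem_filter, mem_product, mem_range, mem_Ico]
    omega
  rw [himage, card_image_of_injOn (injOn_gridValue_gridReps hb hab), add_comm,
    ← card_range (n + 1 - b), ← Nat.card_Ico a (n + 1), ← card_product, ← hshiftable, gridReps,
    card_filter_add_card_filter_not, card_product, card_range, sq]

end GridValues

theorem mem_Rm_iff {m : ℕ} {v : Fin 2 → ℤ} :
    v ∈ Rm m ↔ ∃ n u w : ℕ, u ≤ n ∧ w ≤ n ∧
      v 0 = u * (m + 1) + w * (m + 2) ∧ v 0 + v 1 = (2 * m + 3) * n := by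
  constructor
  · intro hv
    induction hv using AddSubmonoid.closure_induction with
    | mem x hx =>
      simp only [Set.mem_insert_iff, Set.mem_singleton_iff] at hx
      rcases hx with rfl | rfl | rfl | rfl
      all_goals simp only [Matrix.cons_val_zero, Matrix.cons_val_one, Matrix.cons_val_fin_one]
      · exact ⟨1, 0, 0, by simp, by simp, by simp, by simp⟩
      · exact ⟨1, 1, 0, by simp, by simp, by simp, by push_cast; ring⟩
      · exact ⟨1, 0, 1, by simp, by simp, by simp, by push_cast; ring⟩
      · exact ⟨1, 1, 1, by simp, by simp, by push_cast; ring, by simp⟩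
    | zero => exact ⟨0, 0, 0, le_rfl, le_rfl, by simp, by simp⟩
    | add x y _ _ hx hy =>
      obtain ⟨n, u, w, hu, hw, h0, h1⟩ := hx
      obtain ⟨n', u', w', hu', hw', h0', h1'⟩ := hy
      refine ⟨n + n', u + u', w + w', by omega, by omega, ?_, ?_⟩ <;> simp only [Pi.add_apply] <;>
        push_cast
      · linear_combination h0 + h0'
      · linear_combination h1 + h1'
  · rintro ⟨n, u, w, hu, hw, h0, h1⟩
    obtain ⟨α, β, γ, δ, rfl, rfl, rfl⟩ :
        ∃ α β γ δ : ℕ, α + β + γ + δ = n ∧ β + δ = u ∧ γ + δ = w :=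
      ⟨n + (u + w - n) - u - w, u - (u + w - n), w - (u + w - n), u + w - n, by omega, by omega,
        by omega⟩
    have hv : v = α • ![(0 : ℤ), 2 * m + 3] + β • ![(m : ℤ) + 1, m + 2]
        + γ • ![(m : ℤ) + 2, m + 1] + δ • ![(2 : ℤ) * m + 3, 0] := by
      ext i
      fin_cases i
      all_goals simp only [Fin.zero_eta, Fin.mk_one, Pi.add_apply, Pi.smul_apply, Int.nsmul_eq_mul,
        Matrix.cons_val_zero, Matrix.cons_val_one, Matrix.cons_val_fin_one]
      all_goals push_cast at h0 h1 ⊢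
      · linear_combination h0
      · linear_combination h1 - h0
    rw [hv]
    refine add_mem (add_mem (add_mem ?_ ?_) ?_) ?_ <;>
      exact AddSubmonoid.nsmul_mem _ (AddSubmonoid.subset_closure (by simp)) _

theorem Rm_le_nonneg (m : ℕ) : Rm m ≤ AddSubmonoid.nonneg (Fin 2 → ℤ) := by
  refine AddSubmonoid.closure_le.mpr fun v hv => ?_
  simp only [Set.mem_insert_iff, Set.mem_singleton_iff] at hv
  rcases hv with rfl | rfl | rfl | rfl <;>
    simp only [SetLike.mem_coe, AddSubmonoid.mem_nonneg, Pi.le_def, Fin.forall_fin_two,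
      Pi.zero_apply, Matrix.cons_val_zero, Matrix.cons_val_one, Matrix.cons_val_fin_one] <;> omega

theorem dvd_of_mem_closure_Rm {m : ℕ} {v : Fin 2 → ℤ}
    (hv : v ∈ AddSubgroup.closure (Rm m : Set (Fin 2 → ℤ))) : (2 * m + 3 : ℤ) ∣ v 0 + v 1 := by
  induction hv using AddSubgroup.closure_induction with
  | mem x hx =>
    obtain ⟨n, -, -, -, -, -, h⟩ := mem_Rm_iff.mp hx
    exact ⟨n, h⟩
  | zero => simp
  | add x y _ _ hx hy =>
    simpa only [Pi.add_apply, add_add_add_comm] using dvd_add hx hy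
  | neg x _ hx =>
    simpa only [Pi.neg_apply, neg_add] using hx.neg_right

theorem mem_saturation_Rm_iff {m : ℕ} {v : Fin 2 → ℤ} :
    v ∈ saturation (Rm m) ↔ 0 ≤ v 0 ∧ 0 ≤ v 1 ∧ (2 * m + 3 : ℤ) ∣ v 0 + v 1 := by
  constructor
  · rintro ⟨hv, k, hk, hkv⟩
    have hnonneg (i : Fin 2) : 0 ≤ v i := (nsmul_nonneg_iff hk.ne').mp (Rm_le_nonneg m hkv i)
    exact ⟨hnonneg 0, hnonneg 1, dvd_of_mem_closure_Rm hv⟩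
  · rintro ⟨h0, h1, k, hk⟩
    refine ⟨?_, 2 * m + 3, by omega, ?_⟩
    · have hv : v = v 0 • (![(m : ℤ) + 2, m + 1] - ![(m : ℤ) + 1, m + 2])
          + k • ![(0 : ℤ), 2 * m + 3] := by
        ext i
        fin_cases i
        all_goals simp only [Fin.zero_eta, Fin.mk_one, Pi.add_apply, Pi.sub_apply, Pi.smul_apply,
          Matrix.cons_val_zero, Matrix.cons_val_one, Matrix.cons_val_fin_one, smul_eq_mul]
        · ring
        · linear_combination hk
      rw [hv]
      refine add_mem (zsmul_mem (sub_mem ?_ ?_) _) (zsmul_mem ?_ _) <;>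
        exact AddSubgroup.subset_closure (AddSubmonoid.subset_closure (by simp))
    · lift v 0 to ℕ using h0 with x hx
      lift v 1 to ℕ using h1 with y hy
      refine mem_Rm_iff.mpr ⟨x + y, x, x, by omega, by omega, ?_, ?_⟩ <;>
        simp only [Pi.smul_apply, ← hx, ← hy, Int.nsmul_eq_mul] <;> push_cast <;> ring

theorem card_slice_eq (S : Set (Fin 2 → ℤ)) (N : ℤ) (T : Finset ℤ)
    (hT : ∀ t, ![t, N - t] ∈ S ↔ t ∈ T) :
    Nat.card {x : Fin 2 → ℤ // x ∈ S ∧ x 0 + x 1 = N} = #T := by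
  have hx (x : Fin 2 → ℤ) (hx : x 0 + x 1 = N) : x = ![x 0, N - x 0] := by
    ext i
    fin_cases i
    · rfl
    · simp only [Fin.mk_one, Matrix.cons_val_one, Matrix.cons_val_fin_one]
      omega
  rw [← Nat.card_eq_finsetCard]
  refine Nat.card_congr
    { toFun x := ⟨x.1 0, (hT _).mp (hx x.1 x.2.2 ▸ x.2.1)⟩
      invFun t := ⟨![t.1, N - t.1], (hT t).mpr t.2, by simp⟩
      left_inv x := Subtype.ext (hx x.1 x.2.2).symm
      right_inv t := rfl }

theorem coeff_rmHilbSeries_Rm (m n : ℕ) :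
    PowerSeries.coeff n (rmHilbSeries m (Rm m)) + ((n + 1 - (m + 2)) * (n + 1 - (m + 1)) : ℕ)
      = (n + 1) ^ 2 := by
  have hslice (t : ℤ) : ![t, (2 * m + 3) * n - t] ∈ (Rm m : Set (Fin 2 → ℤ)) ↔
      t ∈ (grid n).image (gridValue (m + 1) (m + 2)) := by
    simp only [SetLike.mem_coe, mem_Rm_iff, mem_image, mem_product, mem_range, gridValue,
      Prod.exists]
    constructor
    · rintro ⟨n', u, w, hu, hw, h0, h1⟩
      simp only [Matrix.cons_val_zero, Matrix.cons_val_one, add_sub_cancel] at h0 h1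
      obtain rfl : n' = n := by exact_mod_cast (mul_left_cancel₀ (by positivity) h1).symm
      exact ⟨u, w, ⟨by omega, by omega⟩, by push_cast; linarith⟩
    · rintro ⟨u, w, ⟨hu, hw⟩, rfl⟩
      exact ⟨n, u, w, by omega, by omega, by simp, by simp⟩
  rw [rmHilbSeries, PowerSeries.coeff_mk, card_slice_eq _ _ _ hslice]
  exact_mod_cast card_image_gridValue (by omega) (by omega)
    (Nat.coprime_self_add_right.mpr (Nat.coprime_one_right _)) n

theorem coeff_rmHilbSeries_Rm_of_le {m n : ℕ} (h : n ≤ m + 1) :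
    PowerSeries.coeff n (rmHilbSeries m (Rm m)) = (n + 1) ^ 2 := by
  simpa [Nat.sub_eq_zero_of_le (by omega : n + 1 ≤ m + 2)] using coeff_rmHilbSeries_Rm m n

theorem coeff_rmHilbSeries_Rm_of_ge {m n : ℕ} (h : m ≤ n) :
    PowerSeries.coeff n (rmHilbSeries m (Rm m)) = (n + 1) ^ 2 - (n - m - 1) * (n - m) := by
  have hcount := coeff_rmHilbSeries_Rm m n
  obtain rfl | hlt := h.eq_or_lt
  · simpa using hcount
  · obtain ⟨j, rfl⟩ := Nat.exists_eq_add_of_lt hlt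
    rw [show m + j + 1 + 1 - (m + 2) = j by omega, show m + j + 1 + 1 - (m + 1) = j + 1 by omega]
      at hcount
    push_cast at hcount ⊢
    linear_combination hcount

theorem coeff_rmHilbSeries_saturation (m n : ℕ) :
    PowerSeries.coeff n (rmHilbSeries m (saturation (Rm m))) = (2 * m + 3) * n + 1 := by
  have hslice (t : ℤ) : ![t, (2 * m + 3) * n - t] ∈ (saturation (Rm m) : Set (Fin 2 → ℤ)) ↔
      t ∈ Icc (0 : ℤ) ((2 * m + 3) * n) := by
    simp [mem_saturation_Rm_iff]
  rw [rmHilbSeries, PowerSeries.coeff_mk, card_slice_eq _ _ _ hslice, Int.card_Icc, sub_zero,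
    Int.toNat_of_nonneg (by positivity)]

theorem eq_of_coe_eq_mul_one_sub_X_sq {R : Type*} [CommRing R] {p q : R[X]} {f : PowerSeries R}
    (hp : (p : PowerSeries R) = f * (1 - PowerSeries.X) ^ 2)
    (h0 : q.coeff 0 = PowerSeries.coeff 0 f)
    (h1 : q.coeff 1 = PowerSeries.coeff 1 f - 2 * PowerSeries.coeff 0 f)
    (h2 : ∀ k, q.coeff (k + 2) =
      PowerSeries.coeff (k + 2) f - 2 * PowerSeries.coeff (k + 1) f + PowerSeries.coeff k f) :
    p = q := by
  have hcoeff (k : ℕ) : p.coeff k = PowerSeries.coeff k f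
      - (PowerSeries.coeff k (f * PowerSeries.X ^ 1) + PowerSeries.coeff k (f * PowerSeries.X ^ 1))
      + PowerSeries.coeff k (f * PowerSeries.X ^ 2) := by
    rw [← coeff_coe, hp, ← map_add, ← map_sub, ← map_add]
    ring_nf
  ext (_ | _ | k)
  · simp [hcoeff, h0]
  · simp [hcoeff, h1, PowerSeries.coeff_mul_X_pow', two_mul]
  · simp [hcoeff, h2, PowerSeries.coeff_mul_X_pow', two_mul]

theorem coeff_one_add_C_two_mul_sum_X_pow (m k : ℕ) :
    (1 + C 2 * ∑ i ∈ Icc 1 (m + 1), X ^ i : ℤ[X]).coeff k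
      = if k = 0 then 1 else if k ≤ m + 1 then 2 else 0 := by
  rw [coeff_add, coeff_one, coeff_C_mul, finsetSum_coeff]
  simp only [coeff_X_pow, sum_ite_eq, mem_Icc]
  split_ifs <;> omega

theorem natDegree_one_add_C_two_mul_sum_X_pow (m : ℕ) :
    (1 + C 2 * ∑ i ∈ Icc 1 (m + 1), X ^ i : ℤ[X]).natDegree = m + 1 := by
  refine natDegree_eq_of_le_of_coeff_ne_zero (natDegree_le_iff_coeff_eq_zero.mpr fun k hk => ?_) ?_
  · rw [coeff_one_add_C_two_mul_sum_X_pow, if_neg (by omega), if_neg (by omega)]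
  · rw [coeff_one_add_C_two_mul_sum_X_pow, if_neg (by omega), if_pos le_rfl]
    norm_num

theorem hPoly_Rm_eq {m : ℕ} {h : ℤ[X]}
    (hh : (h : PowerSeries ℤ) = rmHilbSeries m (Rm m) * (1 - PowerSeries.X) ^ 2) :
    h = 1 + C 2 * ∑ i ∈ Icc 1 (m + 1), X ^ i := by
  refine eq_of_coe_eq_mul_one_sub_X_sq hh ?_ ?_ fun k => ?_
  · rw [coeff_one_add_C_two_mul_sum_X_pow, coeff_rmHilbSeries_Rm_of_le (by omega)]
    norm_num
  · rw [coeff_one_add_C_two_mul_sum_X_pow, coeff_rmHilbSeries_Rm_of_le (by omega),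
      coeff_rmHilbSeries_Rm_of_le (by omega)]
    norm_num
  · rw [coeff_one_add_C_two_mul_sum_X_pow, if_neg (by omega)]
    rcases lt_or_ge k m with hk | hk
    · rw [if_pos (by omega), coeff_rmHilbSeries_Rm_of_le (by omega),
        coeff_rmHilbSeries_Rm_of_le (by omega), coeff_rmHilbSeries_Rm_of_le (by omega)]
      push_cast
      ring
    · rw [if_neg (by omega), coeff_rmHilbSeries_Rm_of_ge (by omega),
        coeff_rmHilbSeries_Rm_of_ge (by omega), coeff_rmHilbSeries_Rm_of_ge hk]
      push_cast
      ring

theorem hPoly_saturation_Rm_eq {m : ℕ} {hbar : ℤ[X]}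
    (hhbar : (hbar : PowerSeries ℤ) =
      rmHilbSeries m (saturation (Rm m)) * (1 - PowerSeries.X) ^ 2) :
    hbar = C (2 * m + 2 : ℤ) * X + C 1 := by
  refine eq_of_coe_eq_mul_one_sub_X_sq hhbar ?_ ?_ fun k => ?_ <;>
    simp only [coeff_rmHilbSeries_saturation, coeff_add, coeff_C_mul_X, coeff_C]
  · norm_num
  · norm_num
    ring
  · rw [if_neg (by omega), if_neg (by omega)]
    push_cast
    ring

open Polynomial in
/-- **Theorem.** The h-polynomial of `k[R_m]` is `1 + 2t + 2t² + ⋯ + 2t^{m+1}`; consequently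
`deg h_{R_m}(t) − deg h_{R̄_m}(t) = m`, so the degree of the h-polynomial of a monoid algebra
can exceed that of its normalization by an arbitrary amount. -/
theorem rm_hPoly (m : ℕ) (h hbar : Polynomial ℤ)
    (hh : (h : PowerSeries ℤ) =
      rmHilbSeries m (Rm m : Set (Fin 2 → ℤ)) * (1 - PowerSeries.X) ^ 2)
    (hhbar : (hbar : PowerSeries ℤ) =
      rmHilbSeries m (saturation (Rm m) : Set (Fin 2 → ℤ)) * (1 - PowerSeries.X) ^ 2) :
    h = 1 + C 2 * ∑ i ∈ Finset.Icc 1 (m + 1), X ^ i ∧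
    (h.natDegree : ℤ) - (hbar.natDegree : ℤ) = m := by
  refine ⟨hPoly_Rm_eq hh, ?_⟩
  rw [hPoly_Rm_eq hh, hPoly_saturation_Rm_eq hhbar, natDegree_one_add_C_two_mul_sum_X_pow,
    natDegree_linear (by omega)]
  push_cast
  ring

end MonoidHilbert
end
end
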